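/- arXiv:2604.10047 — 3 statements merged into one kernel-verified Lean document; each statement's English description precedes it below -/
import Mathlib

section
/- For k₁ ∈ ℕ, the set A_{Λ(k₁,∞)} = {P₁(n) : n₁ = n₂ ≤ k₁} ∪ {P₃((k₁,l₂)) : l₂ ≥ k₁} is an ultrafilter in the semilattice E of projections of T, and it has no minimum element. -/
open ContinuousLinearMap
open scoped Classical

noncomputable section

namespace SOq

variable {H : Type} [NormedAddCommGroup H] [InnerProductSpace ℂ H] [CompleteSpace H]

/-- `pj A = 1 - A* A`; for the left shift this is the rank-one projection onto `e 0`. -/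
def pj (A : H →L[ℂ] H) : H →L[ℂ] H := 1 - adjoint A * A

/-- `B₁(r,n,m) = S*^{n₁} S^{m₁} ⊗ S*^{n₁} S^{m₁} ⊗ t^r`, where `A`, `B'` are the shifts
acting on the first, resp. second, tensor factor and `T' r` is `1 ⊗ 1 ⊗ t^r`. -/
def B1 (A B' : H →L[ℂ] H) (T' : ℤ → (H →L[ℂ] H)) (r : ℤ) (n m : ℕ × ℕ) : H →L[ℂ] H :=
  (adjoint A) ^ n.1 * A ^ m.1 * (adjoint B') ^ n.1 * B' ^ m.1 * T' r

/-- `B₂(r,n,m) = S*^{n₁} S^{m₁} ⊗ S*^{n₂} p S^{m₂} ⊗ t^r`. -/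
def B2 (A B' : H →L[ℂ] H) (T' : ℤ → (H →L[ℂ] H)) (r : ℤ) (n m : ℕ × ℕ) : H →L[ℂ] H :=
  (adjoint A) ^ n.1 * A ^ m.1 * (adjoint B') ^ n.2 * pj B' * B' ^ m.2 * T' r

/-- `B₃(r,n,m) = S*^{n₁} p S^{m₁} ⊗ S*^{n₂} S^{m₂} ⊗ t^r`. -/
def B3 (A B' : H →L[ℂ] H) (T' : ℤ → (H →L[ℂ] H)) (r : ℤ) (n m : ℕ × ℕ) : H →L[ℂ] H :=
  (adjoint A) ^ n.1 * pj A * A ^ m.1 * (adjoint B') ^ n.2 * B' ^ m.2 * T' r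

/-- `B₄(r,n,m) = S*^{n₁} p S^{m₁} ⊗ S*^{n₂} p S^{m₂} ⊗ t^r`. -/
def B4 (A B' : H →L[ℂ] H) (T' : ℤ → (H →L[ℂ] H)) (r : ℤ) (n m : ℕ × ℕ) : H →L[ℂ] H :=
  (adjoint A) ^ n.1 * pj A * A ^ m.1 * (adjoint B') ^ n.2 * pj B' * B' ^ m.2 * T' r

/-- `P_i(n) = B_i(0,n,n)`. -/
def P1 (A B' : H →L[ℂ] H) (T' : ℤ → (H →L[ℂ] H)) (n : ℕ × ℕ) : H →L[ℂ] H := B1 A B' T' 0 n n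
def P2 (A B' : H →L[ℂ] H) (T' : ℤ → (H →L[ℂ] H)) (n : ℕ × ℕ) : H →L[ℂ] H := B2 A B' T' 0 n n
def P3 (A B' : H →L[ℂ] H) (T' : ℤ → (H →L[ℂ] H)) (n : ℕ × ℕ) : H →L[ℂ] H := B3 A B' T' 0 n n
def P4 (A B' : H →L[ℂ] H) (T' : ℤ → (H →L[ℂ] H)) (n : ℕ × ℕ) : H →L[ℂ] H := B4 A B' T' 0 n n

/-- The hypotheses identifying `H` with `ℓ²(ℕ)⊗ℓ²(ℕ)⊗ℓ²(ℤ)` with orthonormal basis `e`,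
`A = S⊗1⊗1`, `B' = 1⊗S⊗1` (left shifts) and `T' r = 1⊗1⊗t^r` (bilateral shift powers). -/
def ShiftHyp (e : HilbertBasis (ℕ × ℕ × ℤ) ℂ H) (A B' : H →L[ℂ] H)
    (T' : ℤ → (H →L[ℂ] H)) : Prop :=
  (∀ (j : ℕ) (k : ℤ), A (e (0, j, k)) = 0) ∧
  (∀ (i j : ℕ) (k : ℤ), A (e (i + 1, j, k)) = e (i, j, k)) ∧
  (∀ (i : ℕ) (k : ℤ), B' (e (i, 0, k)) = 0) ∧
  (∀ (i j : ℕ) (k : ℤ), B' (e (i, j + 1, k)) = e (i, j, k)) ∧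
  (∀ (r : ℤ) (i j : ℕ) (k : ℤ), T' r (e (i, j, k)) = e (i, j, k + r))

/-- The inverse semigroup `T`: zero together with all admissible words `B_i(r,n,m)`. -/
def TSet (A B' : H →L[ℂ] H) (T' : ℤ → (H →L[ℂ] H)) : Set (H →L[ℂ] H) :=
  {0} ∪ {x | ∃ n m : ℕ × ℕ, x = B1 A B' T' ((m.1 : ℤ) - n.1) n m} ∪
  {x | ∃ n m : ℕ × ℕ, n.2 ≤ n.1 ∧ m.2 ≤ m.1 ∧ x = B2 A B' T' ((m.1 : ℤ) - n.1) n m} ∪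
  {x | ∃ n m : ℕ × ℕ, n.1 ≤ n.2 ∧ m.1 ≤ m.2 ∧ x = B3 A B' T' ((m.2 : ℤ) - n.2) n m} ∪
  {x | ∃ (r : ℤ) (n m : ℕ × ℕ), x = B4 A B' T' r n m}

/-- The projection semilattice `E` of `T`. -/
def ESet (A B' : H →L[ℂ] H) (T' : ℤ → (H →L[ℂ] H)) : Set (H →L[ℂ] H) :=
  {0} ∪ {x | ∃ n : ℕ, x = P1 A B' T' (n, n)} ∪
  {x | ∃ n : ℕ × ℕ, n.2 ≤ n.1 ∧ x = P2 A B' T' n} ∪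
  {x | ∃ n : ℕ × ℕ, n.1 ≤ n.2 ∧ x = P3 A B' T' n} ∪
  {x | ∃ n : ℕ × ℕ, x = P4 A B' T' n}

/-- A filter in a semilattice-with-zero `E` of projections (`e ≤ f ↔ e * f = e`). -/
def IsFilterIn {X : Type} [Ring X] (E A : Set X) : Prop :=
  A ⊆ E ∧ (0 : X) ∉ A ∧ (∀ a ∈ A, ∀ f ∈ E, a * f = a → f ∈ A) ∧ ∀ a ∈ A, ∀ b ∈ A, a * b ∈ A

/-- An ultrafilter: a maximal filter. -/
def IsUltrafilterIn {X : Type} [Ring X] (E A : Set X) : Prop :=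
  IsFilterIn E A ∧ ∀ B, IsFilterIn E B → A ⊆ B → B = A

/-- `A_{Λ(k)}` for finite `k ∈ ℕ²`. -/
def ALamFin (A B' : H →L[ℂ] H) (T' : ℤ → (H →L[ℂ] H)) (k : ℕ × ℕ) : Set (H →L[ℂ] H) :=
  {x | ∃ n : ℕ, n ≤ min k.1 k.2 ∧ x = P1 A B' T' (n, n)} ∪
  {x | ∃ n : ℕ × ℕ, n.2 = k.2 ∧ n.2 ≤ n.1 ∧ n.1 ≤ k.1 ∧ x = P2 A B' T' n} ∪
  {x | ∃ n : ℕ × ℕ, n.1 = k.1 ∧ n.1 ≤ n.2 ∧ n.2 ≤ k.2 ∧ x = P3 A B' T' n} ∪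
  {P4 A B' T' k}

/-- `A_{Λ(k)}` for `k ∈ (ℕ∪{∞})²`, with `∞` encoded as `none`. -/
def ALam (A B' : H →L[ℂ] H) (T' : ℤ → (H →L[ℂ] H)) :
    Option ℕ × Option ℕ → Set (H →L[ℂ] H) := fun k =>
  match k with
  | (some k1, some k2) => ALamFin A B' T' (k1, k2)
  | (some k1, none) =>
      {x | ∃ n : ℕ, n ≤ k1 ∧ x = P1 A B' T' (n, n)} ∪
      {x | ∃ l : ℕ, k1 ≤ l ∧ x = P3 A B' T' (k1, l)}
  | (none, some k2) =>
      {x | ∃ n : ℕ, n ≤ k2 ∧ x = P1 A B' T' (n, n)} ∪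
      {x | ∃ l : ℕ, k2 ≤ l ∧ x = P2 A B' T' (l, k2)}
  | (none, none) => {x | ∃ l : ℕ, x = P1 A B' T' (l, l)}

/-- The character (indicator function) of a subset. -/
def charOf {X : Type} (s : Set X) : X → Bool := fun x => decide (x ∈ s)

/-- Characters on `E`: nonzero multiplicative `{0,1}`-valued maps killing `0`. -/
def IsChar {X : Type} [Ring X] (E : Set X) (x : X → Bool) : Prop :=
  (∃ a ∈ E, x a = true) ∧ x 0 = false ∧ ∀ a ∈ E, ∀ b ∈ E, x (a * b) = (x a && x b)

/-- `n ≤ k` for `n : ℕ` and `k ∈ ℕ∪{∞}` (`∞ = none`). -/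
def leO (n : ℕ) (k : Option ℕ) : Prop := ∀ m : ℕ, k = some m → n ≤ m

/-- The domain set `D_s = {x ∈ Ê_tight : x(s s*) = 1}` (tight = ultrafilter characters). -/
def Dset (A B' : H →L[ℂ] H) (T' : ℤ → (H →L[ℂ] H)) (s : H →L[ℂ] H) :
    Set ((H →L[ℂ] H) → Bool) :=
  {x | (∃ Aset, IsUltrafilterIn (ESet A B' T') Aset ∧ x = charOf Aset) ∧
    x (s * adjoint s) = true}
section Aux

set_option linter.unusedSectionVars false
open scoped InnerProductSpace

variable {ι : Type*} (e : HilbertBasis ι ℂ H)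

lemma vec_ext {x y : H} (h : ∀ v, ⟪e v, x⟫_ℂ = ⟪e v, y⟫_ℂ) : x = y := by
  apply e.repr.injective
  ext v
  rw [e.repr_apply_apply, e.repr_apply_apply, h]

lemma op_ext {x y : H →L[ℂ] H} (h : ∀ v, x (e v) = y (e v)) : x = y := by
  have hd : Dense (↑(Submodule.span ℂ (Set.range e)) : Set H) := by
    rw [Submodule.dense_iff_topologicalClosure_eq_top]
    simpa using e.dense_span
  exact ContinuousLinearMap.ext_on hd (by rintro _ ⟨v, rfl⟩; exact h v)

lemma e_ne (v : ι) : e v ≠ 0 := by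
  have h1 := e.orthonormal.1 v
  intro h; rw [h] at h1; simp at h1

lemma e_inner (v w : ι) : ⟪e v, e w⟫_ℂ = if v = w then 1 else 0 :=
  orthonormal_iff_ite.mp e.orthonormal v w

end Aux

section Diag

set_option linter.unusedSectionVars false
open scoped InnerProductSpace

variable (e : HilbertBasis (ℕ × ℕ × ℤ) ℂ H) (A B' : H →L[ℂ] H) (T' : ℤ → (H →L[ℂ] H))

/-- `x` acts diagonally on the basis, as the projection given by the indicator of `S`. -/
def Diag (x : H →L[ℂ] H) (S : Set (ℕ × ℕ)) : Prop :=
  ∀ (i j : ℕ) (k : ℤ), x (e (i, j, k)) = if (i, j) ∈ S then e (i, j, k) else 0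

variable {e A B' T'}

lemma diag_zero : Diag e (0 : H →L[ℂ] H) ∅ := by
  intro i j k; simp

lemma Diag.mul {x y : H →L[ℂ] H} {Sx Sy : Set (ℕ × ℕ)}
    (hx : Diag e x Sx) (hy : Diag e y Sy) : Diag e (x * y) (Sx ∩ Sy) := by
  intro i j k
  rw [ContinuousLinearMap.mul_apply, hy]
  by_cases h : (i, j) ∈ Sy
  · rw [if_pos h, hx]
    by_cases h2 : (i, j) ∈ Sx
    · rw [if_pos h2, if_pos ⟨h2, h⟩]
    · rw [if_neg h2, if_neg (fun hh => h2 hh.1)]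
  · rw [if_neg h, map_zero, if_neg (fun hh => h hh.2)]

lemma Diag.sets_eq {x : H →L[ℂ] H} {S S' : Set (ℕ × ℕ)}
    (hx : Diag e x S) (hx' : Diag e x S') : S = S' := by
  ext ⟨i, j⟩
  have h1 := hx i j 0
  have h2 := hx' i j 0
  constructor <;> intro hm
  · by_contra hm'
    rw [if_pos hm] at h1; rw [if_neg hm'] at h2
    exact e_ne e _ (h1.symm.trans h2)
  · by_contra hm'
    rw [if_pos hm] at h2; rw [if_neg hm'] at h1
    exact e_ne e _ (h2.symm.trans h1)

lemma Diag.congr {x y : H →L[ℂ] H} {S : Set (ℕ × ℕ)}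
    (hx : Diag e x S) (hy : Diag e y S) : x = y :=
  op_ext e (fun v => by
    obtain ⟨i, j, k⟩ := v
    rw [hx i j k, hy i j k])

lemma Diag.congr' {x y : H →L[ℂ] H} {S T : Set (ℕ × ℕ)}
    (hx : Diag e x S) (hy : Diag e y T) (hST : S = T) : x = y :=
  hx.congr (hST ▸ hy)

lemma Diag.eq_zero {x : H →L[ℂ] H} {S : Set (ℕ × ℕ)}
    (hx : Diag e x S) (h : S = ∅) : x = 0 :=
  hx.congr' diag_zero h

lemma Diag.ne_zero {x : H →L[ℂ] H} {S : Set (ℕ × ℕ)}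
    (hx : Diag e x S) (h : S.Nonempty) : x ≠ 0 := by
  intro h0
  rw [h0] at hx
  rw [hx.sets_eq diag_zero] at h
  exact Set.not_nonempty_empty h

lemma Diag.subset_of_mul_eq {x y : H →L[ℂ] H} {S T : Set (ℕ × ℕ)}
    (hx : Diag e x S) (hy : Diag e y T) (h : x * y = x) : S ⊆ T := by
  have h2 : Diag e x (S ∩ T) := h ▸ hx.mul hy
  have h3 : S = S ∩ T := hx.sets_eq h2
  intro v hv
  exact (h3 ▸ hv : v ∈ S ∩ T).2

end Diag
section Shifts

set_option linter.unusedSectionVars false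
open scoped InnerProductSpace

variable {e : HilbertBasis (ℕ × ℕ × ℤ) ℂ H} {A B' : H →L[ℂ] H} {T' : ℤ → (H →L[ℂ] H)}
variable (hyp : ShiftHyp e A B' T')
include hyp

lemma adjA_apply (i j : ℕ) (k : ℤ) : adjoint A (e (i, j, k)) = e (i + 1, j, k) := by
  apply vec_ext e
  rintro ⟨a, b, c⟩
  rw [ContinuousLinearMap.adjoint_inner_right]
  cases a with
  | zero =>
    rw [hyp.1 b c, inner_zero_left, e_inner, if_neg (by simp [Prod.ext_iff])]
  | succ a =>
    rw [hyp.2.1 a b c, e_inner, e_inner]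
    have hc : ((a, b, c) = (i, j, k)) ↔ ((a + 1, b, c) = (i + 1, j, k)) := by
      simp [Prod.ext_iff]
    by_cases hd : (a, b, c) = (i, j, k)
    · rw [if_pos hd, if_pos (hc.mp hd)]
    · rw [if_neg hd, if_neg (fun hh => hd (hc.mpr hh))]

lemma adjB_apply (i j : ℕ) (k : ℤ) : adjoint B' (e (i, j, k)) = e (i, j + 1, k) := by
  apply vec_ext e
  rintro ⟨a, b, c⟩
  rw [ContinuousLinearMap.adjoint_inner_right]
  cases b with
  | zero =>
    rw [hyp.2.2.1 a c, inner_zero_left, e_inner, if_neg (by simp [Prod.ext_iff])]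
  | succ b =>
    rw [hyp.2.2.2.1 a b c, e_inner, e_inner]
    have hc : ((a, b, c) = (i, j, k)) ↔ ((a, b + 1, c) = (i, j + 1, k)) := by
      simp [Prod.ext_iff]
    by_cases hd : (a, b, c) = (i, j, k)
    · rw [if_pos hd, if_pos (hc.mp hd)]
    · rw [if_neg hd, if_neg (fun hh => hd (hc.mpr hh))]

lemma Apow_apply (m i j : ℕ) (k : ℤ) :
    (A ^ m) (e (i, j, k)) = if m ≤ i then e (i - m, j, k) else 0 := by
  induction m generalizing i with
  | zero => simp
  | succ m ih =>
    rw [pow_succ, ContinuousLinearMap.mul_apply]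
    cases i with
    | zero => rw [hyp.1, map_zero, if_neg (by omega)]
    | succ i =>
      rw [hyp.2.1, ih]
      by_cases h : m ≤ i
      · rw [if_pos h, if_pos (by omega), Nat.succ_sub_succ]
      · rw [if_neg h, if_neg (by omega)]

lemma Bpow_apply (m i j : ℕ) (k : ℤ) :
    (B' ^ m) (e (i, j, k)) = if m ≤ j then e (i, j - m, k) else 0 := by
  induction m generalizing j with
  | zero => simp
  | succ m ih =>
    rw [pow_succ, ContinuousLinearMap.mul_apply]
    cases j with
    | zero => rw [hyp.2.2.1, map_zero, if_neg (by omega)]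
    | succ j =>
      rw [hyp.2.2.2.1, ih]
      by_cases h : m ≤ j
      · rw [if_pos h, if_pos (by omega), Nat.succ_sub_succ]
      · rw [if_neg h, if_neg (by omega)]

lemma adjApow_apply (m i j : ℕ) (k : ℤ) :
    ((adjoint A) ^ m) (e (i, j, k)) = e (i + m, j, k) := by
  induction m generalizing i with
  | zero => simp
  | succ m ih =>
    rw [pow_succ, ContinuousLinearMap.mul_apply, adjA_apply hyp, ih]
    have : i + 1 + m = i + (m + 1) := by omega
    rw [this]

lemma adjBpow_apply (m i j : ℕ) (k : ℤ) :
    ((adjoint B') ^ m) (e (i, j, k)) = e (i, j + m, k) := by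
  induction m generalizing j with
  | zero => simp
  | succ m ih =>
    rw [pow_succ, ContinuousLinearMap.mul_apply, adjB_apply hyp, ih]
    have : j + 1 + m = j + (m + 1) := by omega
    rw [this]

lemma pjA_apply (i j : ℕ) (k : ℤ) :
    pj A (e (i, j, k)) = if i = 0 then e (i, j, k) else 0 := by
  unfold pj
  rw [ContinuousLinearMap.sub_apply, ContinuousLinearMap.one_apply,
    ContinuousLinearMap.mul_apply]
  cases i with
  | zero => rw [hyp.1, map_zero, if_pos rfl, sub_zero]
  | succ i => rw [hyp.2.1, adjA_apply hyp, if_neg (by omega), sub_self]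

lemma pjB_apply (i j : ℕ) (k : ℤ) :
    pj B' (e (i, j, k)) = if j = 0 then e (i, j, k) else 0 := by
  unfold pj
  rw [ContinuousLinearMap.sub_apply, ContinuousLinearMap.one_apply,
    ContinuousLinearMap.mul_apply]
  cases j with
  | zero => rw [hyp.2.2.1, map_zero, if_pos rfl, sub_zero]
  | succ j => rw [hyp.2.2.2.1, adjB_apply hyp, if_neg (by omega), sub_self]

lemma T0_apply (i j : ℕ) (k : ℤ) : T' 0 (e (i, j, k)) = e (i, j, k) := by
  rw [hyp.2.2.2.2 0 i j k, add_zero]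

end Shifts
section Proj

set_option linter.unusedSectionVars false

variable {e : HilbertBasis (ℕ × ℕ × ℤ) ℂ H} {A B' : H →L[ℂ] H} {T' : ℤ → (H →L[ℂ] H)}
variable (hyp : ShiftHyp e A B' T')
include hyp

lemma diagP1 (n : ℕ) :
    Diag e (P1 A B' T' (n, n)) {v : ℕ × ℕ | n ≤ v.1 ∧ n ≤ v.2} := by
  intro i j k
  show ((adjoint A) ^ n * A ^ n * (adjoint B') ^ n * B' ^ n * T' 0) (e (i, j, k)) = _
  simp only [ContinuousLinearMap.mul_apply]
  rw [T0_apply hyp, Bpow_apply hyp]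
  by_cases hj : n ≤ j
  · rw [if_pos hj, adjBpow_apply hyp, Nat.sub_add_cancel hj, Apow_apply hyp]
    by_cases hi : n ≤ i
    · rw [if_pos hi, adjApow_apply hyp, Nat.sub_add_cancel hi,
        if_pos (Set.mem_setOf_eq ▸ ⟨hi, hj⟩)]
    · rw [if_neg hi]; simp only [map_zero]; rw [if_neg (fun h => hi h.1)]
  · rw [if_neg hj]; simp only [map_zero]; rw [if_neg (fun h => hj h.2)]

lemma diagP2 (n : ℕ × ℕ) :
    Diag e (P2 A B' T' n) {v : ℕ × ℕ | n.1 ≤ v.1 ∧ v.2 = n.2} := by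
  intro i j k
  show ((adjoint A) ^ n.1 * A ^ n.1 * (adjoint B') ^ n.2 * pj B' * B' ^ n.2 * T' 0)
      (e (i, j, k)) = _
  simp only [ContinuousLinearMap.mul_apply]
  rw [T0_apply hyp, Bpow_apply hyp]
  by_cases hj : n.2 ≤ j
  · rw [if_pos hj, pjB_apply hyp]
    by_cases hj0 : j - n.2 = 0
    · have hj2 : j = n.2 := by omega
      rw [if_pos hj0, adjBpow_apply hyp, Nat.sub_add_cancel hj, Apow_apply hyp]
      by_cases hi : n.1 ≤ i
      · rw [if_pos hi, adjApow_apply hyp, Nat.sub_add_cancel hi,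
          if_pos (Set.mem_setOf_eq ▸ ⟨hi, hj2⟩)]
      · rw [if_neg hi]; simp only [map_zero]; rw [if_neg (fun h => hi h.1)]
    · rw [if_neg hj0]; simp only [map_zero]
      rw [if_neg (fun h => hj0 (by have := h.2; omega))]
  · rw [if_neg hj]; simp only [map_zero]
    rw [if_neg (fun h => hj (by have := h.2; omega))]

lemma diagP3 (n : ℕ × ℕ) :
    Diag e (P3 A B' T' n) {v : ℕ × ℕ | v.1 = n.1 ∧ n.2 ≤ v.2} := by
  intro i j k
  show ((adjoint A) ^ n.1 * pj A * A ^ n.1 * (adjoint B') ^ n.2 * B' ^ n.2 * T' 0)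
      (e (i, j, k)) = _
  simp only [ContinuousLinearMap.mul_apply]
  rw [T0_apply hyp, Bpow_apply hyp]
  by_cases hj : n.2 ≤ j
  · rw [if_pos hj, adjBpow_apply hyp, Nat.sub_add_cancel hj, Apow_apply hyp]
    by_cases hi : n.1 ≤ i
    · rw [if_pos hi, pjA_apply hyp]
      by_cases hi0 : i - n.1 = 0
      · have hi2 : i = n.1 := by omega
        rw [if_pos hi0, adjApow_apply hyp, Nat.sub_add_cancel hi,
          if_pos (Set.mem_setOf_eq ▸ ⟨hi2, hj⟩)]
      · rw [if_neg hi0]; simp only [map_zero]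
        rw [if_neg (fun h => hi0 (by have := h.1; omega))]
    · rw [if_neg hi]; simp only [map_zero]
      rw [if_neg (fun h => hi (by have := h.1; omega))]
  · rw [if_neg hj]; simp only [map_zero]; rw [if_neg (fun h => hj h.2)]

lemma diagP4 (n : ℕ × ℕ) : Diag e (P4 A B' T' n) {n} := by
  intro i j k
  have hmem : ((i, j) ∈ ({n} : Set (ℕ × ℕ))) ↔ (i = n.1 ∧ j = n.2) := by
    rw [Set.mem_singleton_iff, Prod.ext_iff]
  show ((adjoint A) ^ n.1 * pj A * A ^ n.1 * (adjoint B') ^ n.2 * pj B' * B' ^ n.2 * T' 0)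
      (e (i, j, k)) = _
  simp only [ContinuousLinearMap.mul_apply]
  rw [T0_apply hyp, Bpow_apply hyp]
  by_cases hj : n.2 ≤ j
  · rw [if_pos hj, pjB_apply hyp]
    by_cases hj0 : j - n.2 = 0
    · have hj2 : j = n.2 := by omega
      rw [if_pos hj0, adjBpow_apply hyp, Nat.sub_add_cancel hj, Apow_apply hyp]
      by_cases hi : n.1 ≤ i
      · rw [if_pos hi, pjA_apply hyp]
        by_cases hi0 : i - n.1 = 0
        · have hi2 : i = n.1 := by omega
          rw [if_pos hi0, adjApow_apply hyp, Nat.sub_add_cancel hi,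
            if_pos (hmem.mpr ⟨hi2, hj2⟩)]
        · rw [if_neg hi0]; simp only [map_zero]
          rw [if_neg (fun h => hi0 (by have := hmem.mp h; omega))]
      · rw [if_neg hi]; simp only [map_zero]
        rw [if_neg (fun h => hi (by have := hmem.mp h; omega))]
    · rw [if_neg hj0]; simp only [map_zero]
      rw [if_neg (fun h => hj0 (by have := hmem.mp h; omega))]
  · rw [if_neg hj]; simp only [map_zero]
    rw [if_neg (fun h => hj (by have := hmem.mp h; omega))]

end Proj
section Main

set_option linter.unusedSectionVars false

variable {e : HilbertBasis (ℕ × ℕ × ℤ) ℂ H} {A B' : H →L[ℂ] H} {T' : ℤ → (H →L[ℂ] H)}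

lemma alam_subset (k1 : ℕ) : ALam A B' T' (some k1, none) ⊆ ESet A B' T' := by
  intro x hx
  simp only [ALam, Set.mem_union, Set.mem_setOf_eq] at hx
  simp only [ESet, Set.mem_union, Set.mem_setOf_eq, Set.mem_singleton_iff]
  rcases hx with ⟨n, hn, rfl⟩ | ⟨l, hl, rfl⟩
  · exact Or.inl (Or.inl (Or.inl (Or.inr ⟨n, rfl⟩)))
  · exact Or.inl (Or.inr ⟨(k1, l), hl, rfl⟩)

variable (hyp : ShiftHyp e A B' T')
include hyp

lemma crux (k1 : ℕ) {b : H →L[ℂ] H} (hb : b ∈ ESet A B' T')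
    (hQ : ∀ S : Set (ℕ × ℕ), Diag e b S → ∀ m : ℕ, ∃ j, m ≤ j ∧ (k1, j) ∈ S) :
    b ∈ ALam A B' T' (some k1, none) := by
  simp only [ESet, Set.mem_union, Set.mem_setOf_eq, Set.mem_singleton_iff] at hb
  simp only [ALam, Set.mem_union, Set.mem_setOf_eq]
  rcases hb with ((((rfl | ⟨n, rfl⟩) | ⟨n, hn, rfl⟩) | ⟨⟨n1, n2⟩, hn, rfl⟩) | ⟨n, rfl⟩)
  · obtain ⟨j, _, hj⟩ := hQ ∅ diag_zero 0
    exact absurd hj (Set.notMem_empty _)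
  · obtain ⟨j, _, hj⟩ := hQ _ (diagP1 hyp n) 0
    exact Or.inl ⟨n, hj.1, rfl⟩
  · obtain ⟨j, hj1, hj2⟩ := hQ _ (diagP2 hyp n) (n.2 + 1)
    have := hj2.2
    omega
  · obtain ⟨j, _, hj⟩ := hQ _ (diagP3 hyp (n1, n2)) 0
    have hk : k1 = n1 := hj.1
    simp only at hn
    exact Or.inr ⟨n2, by omega, by rw [hk]⟩
  · obtain ⟨j, hj1, hj2⟩ := hQ _ (diagP4 hyp n) (n.2 + 1)
    rw [Set.mem_singleton_iff, Prod.ext_iff] at hj2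
    have := hj2.2
    simp only at this
    omega

lemma alam_Q (k1 : ℕ) {a : H →L[ℂ] H} (ha : a ∈ ALam A B' T' (some k1, none)) :
    ∃ S, Diag e a S ∧ ∀ m : ℕ, ∃ j, m ≤ j ∧ (k1, j) ∈ S := by
  simp only [ALam, Set.mem_union, Set.mem_setOf_eq] at ha
  rcases ha with ⟨n, hn, rfl⟩ | ⟨l, hl, rfl⟩
  · exact ⟨_, diagP1 hyp n, fun m =>
      ⟨max m n, le_max_left _ _, ⟨hn, le_max_right _ _⟩⟩⟩
  · exact ⟨_, diagP3 hyp (k1, l), fun m =>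
      ⟨max m l, le_max_left _ _, ⟨rfl, le_max_right _ _⟩⟩⟩

lemma alam_mul (k1 : ℕ) {a b : H →L[ℂ] H} (ha : a ∈ ALam A B' T' (some k1, none))
    (hb : b ∈ ALam A B' T' (some k1, none)) :
    a * b ∈ ALam A B' T' (some k1, none) := by
  simp only [ALam, Set.mem_union, Set.mem_setOf_eq] at ha hb ⊢
  rcases ha with ⟨n, hn, rfl⟩ | ⟨l, hl, rfl⟩ <;>
    rcases hb with ⟨n', hn', rfl⟩ | ⟨l', hl', rfl⟩
  · refine Or.inl ⟨max n n', by omega, ?_⟩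
    exact ((diagP1 hyp n).mul (diagP1 hyp n')).congr' (diagP1 hyp (max n n'))
      (by ext ⟨i, j⟩; simp only [Set.mem_inter_iff, Set.mem_setOf_eq]; omega)
  · refine Or.inr ⟨l', hl', ?_⟩
    exact ((diagP1 hyp n).mul (diagP3 hyp (k1, l'))).congr' (diagP3 hyp (k1, l'))
      (by ext ⟨i, j⟩; simp only [Set.mem_inter_iff, Set.mem_setOf_eq]; omega)
  · refine Or.inr ⟨l, hl, ?_⟩
    exact ((diagP3 hyp (k1, l)).mul (diagP1 hyp n')).congr' (diagP3 hyp (k1, l))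
      (by ext ⟨i, j⟩; simp only [Set.mem_inter_iff, Set.mem_setOf_eq]; omega)
  · refine Or.inr ⟨max l l', by omega, ?_⟩
    exact ((diagP3 hyp (k1, l)).mul (diagP3 hyp (k1, l'))).congr'
      (diagP3 hyp (k1, max l l'))
      (by ext ⟨i, j⟩; simp only [Set.mem_inter_iff, Set.mem_setOf_eq]; omega)

lemma alam_filter (k1 : ℕ) :
    IsFilterIn (ESet A B' T') (ALam A B' T' (some k1, none)) := by
  refine ⟨alam_subset k1, ?_, ?_, ?_⟩
  · intro h0
    obtain ⟨S, hS, hQ⟩ := alam_Q hyp k1 h0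
    obtain ⟨j, _, hj⟩ := hQ 0
    rw [hS.sets_eq diag_zero] at hj
    exact Set.notMem_empty _ hj
  · intro a ha f hf h
    obtain ⟨Sa, hda, hQ⟩ := alam_Q hyp k1 ha
    refine crux hyp k1 hf ?_
    intro S hdf m
    obtain ⟨j, hm, hj⟩ := hQ m
    exact ⟨j, hm, hda.subset_of_mul_eq hdf h hj⟩
  · exact fun a ha b hb => alam_mul hyp k1 ha hb

end Main
theorem stmt8 {H : Type} [NormedAddCommGroup H] [InnerProductSpace ℂ H]
    [CompleteSpace H] (e : HilbertBasis (ℕ × ℕ × ℤ) ℂ H) (A B' : H →L[ℂ] H)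
    (T' : ℤ → (H →L[ℂ] H)) (hyp : ShiftHyp e A B' T') :
    ∀ k1 : ℕ,
      IsUltrafilterIn (ESet A B' T') (ALam A B' T' (some k1, none)) ∧
      ¬∃ a ∈ ALam A B' T' (some k1, none),
        ∀ f ∈ ALam A B' T' (some k1, none), a * f = a := by
  intro k1
  constructor
  · refine ⟨alam_filter hyp k1, ?_⟩
    intro B hB hAB
    refine Set.Subset.antisymm ?_ hAB
    intro b hbB
    refine crux hyp k1 (hB.1 hbB) ?_
    intro S hS m
    have hP3 : P3 A B' T' (k1, max m k1) ∈ ALam A B' T' (some k1, none) := by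
      simp only [ALam, Set.mem_union, Set.mem_setOf_eq]
      exact Or.inr ⟨max m k1, le_max_right _ _, rfl⟩
    have hmul : b * P3 A B' T' (k1, max m k1) ∈ B := hB.2.2.2 b hbB _ (hAB hP3)
    have hne : b * P3 A B' T' (k1, max m k1) ≠ 0 := fun h => hB.2.1 (h ▸ hmul)
    have hd := hS.mul (diagP3 hyp (k1, max m k1))
    by_contra hc
    push_neg at hc
    refine hne (hd.eq_zero ?_)
    rw [Set.eq_empty_iff_forall_notMem]
    rintro ⟨i, j⟩ ⟨h1, h2, h3⟩
    simp only at h2 h3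
    exact hc j (le_trans (le_max_left _ _) h3) (h2 ▸ h1)
  · rintro ⟨a, ha, hmin⟩
    obtain ⟨Sa, hda, hQ⟩ := alam_Q hyp k1 ha
    obtain ⟨j0, _, hj0⟩ := hQ 0
    have hf : P3 A B' T' (k1, max (j0 + 1) k1) ∈ ALam A B' T' (some k1, none) := by
      simp only [ALam, Set.mem_union, Set.mem_setOf_eq]
      exact Or.inr ⟨max (j0 + 1) k1, le_max_right _ _, rfl⟩
    have h := hmin _ hf
    have hsub := hda.subset_of_mul_eq (diagP3 hyp (k1, max (j0 + 1) k1)) h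
    have h2 := (hsub hj0).2
    simp only at h2
    omega

end SOq
end
end

section
/- Identify characters of E with filters via indicator functions. The map φ : (ℕ∪{∞})² → Ê_∞ sending k to the character 1_{A_{Λ(k)}} is a homeomorphism, where (ℕ∪{∞})² carries the product topology of two copies of the one-point compactification of ℕ, and Ê_∞ ⊆ {0,1}^E carries the subspace product topology. -/
open ContinuousLinearMap
open scoped Classical

noncomputable section

namespace SOq

variable {H : Type} [NormedAddCommGroup H] [InnerProductSpace ℂ H] [CompleteSpace H]

/-!
Every element of `E` is diagonal in the basis `e`: it keeps `e (i, j, k)` exactly when `(i, j)`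
lies in a box `seg r a ×ˢ seg s b`, read inside the compact space `(ℕ ∪ {∞})²`, where such boxes
are clopen. Products in `E` correspond to intersections of these clopen supports, and `A_{Λ(k)}`
consists of the elements whose support contains `k`. By compactness the supports of the elements
of an ultrafilter have a common point `k`, so the ultrafilter is `A_{Λ(k)}`; conversely
`A_{Λ(k)}` is maximal because the supports form a neighbourhood basis at `k`. Each coordinate
of `k ↦ 1_{A_{Λ(k)}}` is the indicator of a clopen set, hence continuous, and a continuous
bijection from a compact space to a Hausdorff space is a homeomorphism.
-/

open scoped InnerProductSpace
open Filter Topology Set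
open scoped OnePoint

section HilbertBasis

variable {ι ι' 𝕜 E F : Type*} [RCLike 𝕜] [NormedAddCommGroup E] [InnerProductSpace 𝕜 E]

def _root_.HilbertBasis.reindex [CompleteSpace E] (b : HilbertBasis ι 𝕜 E) (σ : ι' ≃ ι) :
    HilbertBasis ι' 𝕜 E :=
  HilbertBasis.mk (b.orthonormal.comp σ σ.injective)
    (by rw [σ.surjective.range_comp, b.dense_span])

@[simp]
theorem _root_.HilbertBasis.reindex_apply [CompleteSpace E] (b : HilbertBasis ι 𝕜 E)
    (σ : ι' ≃ ι) (i : ι') : b.reindex σ i = b (σ i) := by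
  simp [HilbertBasis.reindex]

theorem _root_.HilbertBasis.ext_inner (b : HilbertBasis ι 𝕜 E) {x y : E}
    (h : ∀ i, ⟪b i, x⟫_𝕜 = ⟪b i, y⟫_𝕜) : x = y :=
  b.repr.injective <| lp.ext <| funext fun i => by rw [b.repr_apply_apply, b.repr_apply_apply, h]

theorem _root_.HilbertBasis.ext_continuousLinearMap [NormedAddCommGroup F] [NormedSpace 𝕜 F]
    (b : HilbertBasis ι 𝕜 E) {T U : E →L[𝕜] F} (h : ∀ i, T (b i) = U (b i)) : T = U :=
  ContinuousLinearMap.ext_on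
    (by rw [Submodule.dense_iff_topologicalClosure_eq_top, b.dense_span])
    (by rintro _ ⟨i, rfl⟩; exact h i)

def DiagOn (b : HilbertBasis ι 𝕜 E) (P : E →L[𝕜] E) (S : Set ι) : Prop :=
  ∀ i, P (b i) = if i ∈ S then b i else 0

variable {b : HilbertBasis ι 𝕜 E} {P Q : E →L[𝕜] E} {S S' : Set ι}

theorem diagOn_zero : DiagOn b 0 ∅ := fun _ => by simp

theorem DiagOn.mul (hP : DiagOn b P S) (hQ : DiagOn b Q S') : DiagOn b (P * Q) (S ∩ S') := by
  intro i
  by_cases hi : i ∈ S' <;> by_cases hi' : i ∈ S <;> simp [hP i, hQ i, hi, hi']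

theorem DiagOn.eq (hP : DiagOn b P S) (hQ : DiagOn b Q S) : P = Q :=
  b.ext_continuousLinearMap fun i => by rw [hP, hQ]

theorem DiagOn.set_eq (hS : DiagOn b P S) (hS' : DiagOn b P S') : S = S' := by
  ext i
  have h := (hS i).symm.trans (hS' i)
  have hne := b.orthonormal.ne_zero i
  by_cases hi : i ∈ S <;> by_cases hi' : i ∈ S' <;> simp_all

theorem DiagOn.eq_zero_iff (hP : DiagOn b P S) : P = 0 ↔ S = ∅ :=
  ⟨fun h => hP.set_eq (h ▸ diagOn_zero), fun h => hP.eq (h ▸ diagOn_zero)⟩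

theorem DiagOn.of_reindex [CompleteSpace E] {σ : ι' ≃ ι} {S : Set ι'}
    (h : DiagOn (b.reindex σ) P S) : DiagOn b P (σ.symm ⁻¹' S) := fun i => by
  simpa using h (σ.symm i)

end HilbertBasis

/-- `seg true a` is the ray `[a, ∞]` and `seg false a` the point `{a}` of `ℕ ∪ {∞}`. -/
def seg (r : Bool) (a : ℕ) : Set (OnePoint ℕ) :=
  if r then ((↑) '' Iio a)ᶜ else {(a : OnePoint ℕ)}

@[simp]
theorem infty_mem_seg {r : Bool} {a : ℕ} : ∞ ∈ seg r a ↔ r = true := by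
  cases r <;> simp [seg]

@[simp]
theorem coe_mem_seg_true {a n : ℕ} : (n : OnePoint ℕ) ∈ seg true a ↔ a ≤ n := by
  simp [seg]

@[simp]
theorem coe_mem_seg_false {a n : ℕ} : (n : OnePoint ℕ) ∈ seg false a ↔ n = a := by
  simp [seg]

theorem seg_true_subset {a a' : ℕ} (h : a' ≤ a) : seg true a ⊆ seg true a' := by
  intro x hx
  induction x using OnePoint.rec <;> simp_all
  omega

theorem isClopen_seg (r : Bool) (a : ℕ) : IsClopen (seg r a) := by
  cases r
  · refine ⟨isClosed_singleton, ?_⟩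
    rw [seg, if_neg Bool.false_ne_true, ← image_singleton]
    exact OnePoint.isOpen_image_coe.mpr (isOpen_discrete _)
  · refine ⟨(OnePoint.isOpen_image_coe.mpr (isOpen_discrete _)).isClosed_compl, ?_⟩
    exact OnePoint.isOpen_compl_image_coe.mpr ⟨isClosed_discrete _, (finite_Iio a).isCompact⟩

theorem seg_inter_seg (r r' : Bool) (a a' : ℕ) :
    seg r a ∩ seg r' a' = ∅ ∨ seg r a ∩ seg r' a' = seg (r && r') (max a a') := by
  refine if h : (r = false → a' ≤ a) ∧ (r' = false → a ≤ a') then .inr ?_ else .inl ?_ <;>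
    ext x <;> induction x using OnePoint.rec <;> cases r <;> cases r' <;> simp at h ⊢ <;> grind

theorem exists_seg_subset_of_mem_nhds_infty {V : Set (OnePoint ℕ)} (hV : V ∈ 𝓝 ∞) :
    ∃ M, seg true M ⊆ V := by
  have hcoe : Tendsto ((↑) : ℕ → OnePoint ℕ) atTop (𝓝 ∞) := by
    simpa [coclosedCompact_eq_cocompact, cocompact_eq_atTop] using
      OnePoint.tendsto_coe_infty (X := ℕ)
  obtain ⟨M, hM⟩ := eventually_atTop.mp (hcoe hV)
  refine ⟨M, fun x hx => ?_⟩
  induction x using OnePoint.rec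
  · exact mem_of_mem_nhds hV
  · exact hM _ (coe_mem_seg_true.mp hx)

def box (r s : Bool) (a b : ℕ) : Set (OnePoint ℕ × OnePoint ℕ) := seg r a ×ˢ seg s b

/-- The boxes that occur as supports of elements of `E`: a ray in one coordinate starts no
earlier than the other coordinate. -/
def Admissible (r s : Bool) (a b : ℕ) : Prop := (r = true → b ≤ a) ∧ (s = true → a ≤ b)

theorem Admissible.inf {r s r' s' : Bool} {a b a' b' : ℕ} (h : Admissible r s a b)
    (h' : Admissible r' s' a' b') : Admissible (r && r') (s && s') (max a a') (max b b') := by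
  constructor <;> intro hr <;> simp only [Bool.and_eq_true] at hr
  · have := h.1 hr.1; have := h'.1 hr.2; omega
  · have := h.2 hr.1; have := h'.2 hr.2; omega

theorem isClopen_box (r s : Bool) (a b : ℕ) : IsClopen (box r s a b) :=
  (isClopen_seg r a).prod (isClopen_seg s b)

theorem box_inter_box (r s r' s' : Bool) (a b a' b' : ℕ) :
    box r s a b ∩ box r' s' a' b' = ∅ ∨
      box r s a b ∩ box r' s' a' b' = box (r && r') (s && s') (max a a') (max b b') := by
  rw [box, box, box, prod_inter_prod]
  rcases seg_inter_seg r r' a a' with h | h <;> rcases seg_inter_seg s s' b b' with h' | h' <;>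
    simp [h, h']

theorem exists_box_subset_of_mem_nhds {k : OnePoint ℕ × OnePoint ℕ}
    {U : Set (OnePoint ℕ × OnePoint ℕ)} (hU : U ∈ 𝓝 k) :
    ∃ r s a b, Admissible r s a b ∧ k ∈ box r s a b ∧ box r s a b ⊆ U := by
  obtain ⟨x, y⟩ := k
  rw [nhds_prod_eq] at hU
  obtain ⟨V, hV, W, hW, hVW⟩ := mem_prod_iff.mp hU
  have hVx := mem_of_mem_nhds hV
  have hWy := mem_of_mem_nhds hW
  induction x using OnePoint.rec with
  | infty =>
    obtain ⟨M, hM⟩ := exists_seg_subset_of_mem_nhds_infty hV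
    induction y using OnePoint.rec with
    | infty =>
      obtain ⟨N, hN⟩ := exists_seg_subset_of_mem_nhds_infty hW
      refine ⟨true, true, max M N, max M N, by simp [Admissible], by simp [box], ?_⟩
      exact (prod_mono ((seg_true_subset (le_max_left M N)).trans hM)
        ((seg_true_subset (le_max_right M N)).trans hN)).trans hVW
    | coe b =>
      refine ⟨true, false, max M b, b, by simp [Admissible], by simp [box], ?_⟩
      exact (prod_mono ((seg_true_subset (le_max_left M b)).trans hM)
        (singleton_subset_iff.mpr hWy)).trans hVW
  | coe a =>
    induction y using OnePoint.rec with
    | infty =>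
      obtain ⟨N, hN⟩ := exists_seg_subset_of_mem_nhds_infty hW
      refine ⟨false, true, a, max N a, by simp [Admissible], by simp [box], ?_⟩
      exact (prod_mono (singleton_subset_iff.mpr hVx)
        ((seg_true_subset (le_max_left N a)).trans hN)).trans hVW
    | coe b =>
      exact ⟨false, false, a, b, by simp [Admissible], by simp [box],
        (prod_mono (singleton_subset_iff.mpr hVx) (singleton_subset_iff.mpr hWy)).trans hVW⟩

section Shift

variable {κ : Type*} {b : HilbertBasis (ℕ × κ) ℂ H} {S : H →L[ℂ] H}

def IsUnilateralShift (b : HilbertBasis (ℕ × κ) ℂ H) (S : H →L[ℂ] H) : Prop :=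
  (∀ x, S (b (0, x)) = 0) ∧ ∀ n x, S (b (n + 1, x)) = b (n, x)

namespace IsUnilateralShift

theorem adjoint_apply (hS : IsUnilateralShift b S) (n : ℕ) (x : κ) :
    adjoint S (b (n, x)) = b (n + 1, x) := by
  refine b.ext_inner fun ⟨m, y⟩ => ?_
  rw [adjoint_inner_right]
  have ob := orthonormal_iff_ite.mp b.orthonormal
  cases m with
  | zero => simp [hS.1, ob]
  | succ m => simp [hS.2, ob]

theorem pow_apply (hS : IsUnilateralShift b S) (m n : ℕ) (x : κ) :
    (S ^ m) (b (n, x)) = if m ≤ n then b (n - m, x) else 0 := by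
  induction m generalizing n with
  | zero => simp
  | succ m ih =>
    rw [pow_succ, mul_apply_eq_comp]
    cases n with
    | zero => simp [hS.1]
    | succ n => simp [hS.2, ih]

theorem adjoint_pow_apply (hS : IsUnilateralShift b S) (m n : ℕ) (x : κ) :
    (adjoint S ^ m) (b (n, x)) = b (n + m, x) := by
  induction m generalizing n with
  | zero => simp
  | succ m ih => rw [pow_succ, mul_apply_eq_comp, hS.adjoint_apply, ih, add_assoc, add_comm 1]

theorem pj_apply (hS : IsUnilateralShift b S) (n : ℕ) (x : κ) :
    pj S (b (n, x)) = if n = 0 then b (n, x) else 0 := by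
  cases n with
  | zero => simp [pj, hS.1]
  | succ n => simp [pj, hS.2, hS.adjoint_apply]

end IsUnilateralShift

def block (S : H →L[ℂ] H) (r : Bool) (a : ℕ) : H →L[ℂ] H :=
  adjoint S ^ a * (if r then 1 else pj S) * S ^ a

theorem IsUnilateralShift.diagOn_block (hS : IsUnilateralShift b S) (r : Bool) (a : ℕ) :
    DiagOn b (block S r a) {v | (v.1 : OnePoint ℕ) ∈ seg r a} := by
  rintro ⟨n, x⟩
  simp only [block, mul_apply_eq_comp, hS.pow_apply]
  by_cases h : a ≤ n
  · obtain ⟨m, rfl⟩ := Nat.exists_eq_add_of_le h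
    rw [if_pos h, Nat.add_sub_cancel_left]
    cases r
    · simp only [Bool.false_eq_true, ↓reduceIte, hS.pj_apply, coe_mem_seg_false]
      by_cases hm : m = 0 <;> simp [hm, hS.adjoint_pow_apply]
    · simp [hS.adjoint_pow_apply, add_comm]
  · have hna : n ≠ a := by omega
    cases r <;> simp [h, hna]

end Shift

theorem _root_.DenseRange.subset_of_preimage_subset {X Y : Type*} [TopologicalSpace X]
    {f : Y → X} (hf : DenseRange f) {U V : Set X} (hU : IsOpen U) (hV : IsClosed V)
    (h : f ⁻¹' U ⊆ f ⁻¹' V) : U ⊆ V := by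
  by_contra hUV
  obtain ⟨y, hyU, hyV⟩ := hf.exists_mem_open (hU.sdiff hV) (sdiff_nonempty.mpr hUV)
  exact hyV (h hyU)

def coe₂ (v : ℕ × ℕ × ℤ) : OnePoint ℕ × OnePoint ℕ := (v.1, v.2.1)

theorem denseRange_coe₂ : DenseRange coe₂ := by
  have hsurj : Function.Surjective fun v : ℕ × ℕ × ℤ => (v.1, v.2.1) :=
    fun v => ⟨(v.1, v.2, 0), rfl⟩
  exact (OnePoint.denseRange_coe.prodMap OnePoint.denseRange_coe).comp hsurj.denseRange
    (OnePoint.continuous_coe.prodMap OnePoint.continuous_coe)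

theorem clopen_eq_of_preimage_coe₂_eq {C D : Set (OnePoint ℕ × OnePoint ℕ)} (hC : IsClopen C)
    (hD : IsClopen D) (h : coe₂ ⁻¹' C = coe₂ ⁻¹' D) : C = D :=
  (denseRange_coe₂.subset_of_preimage_subset hC.2 hD.1 h.le).antisymm
    (denseRange_coe₂.subset_of_preimage_subset hD.2 hC.1 h.ge)

def IsClopenSupport (e : HilbertBasis (ℕ × ℕ × ℤ) ℂ H) (p : H →L[ℂ] H)
    (C : Set (OnePoint ℕ × OnePoint ℕ)) : Prop :=
  IsClopen C ∧ DiagOn e p (coe₂ ⁻¹' C)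

section ClopenSupport

variable {e : HilbertBasis (ℕ × ℕ × ℤ) ℂ H} {p q : H →L[ℂ] H}
  {C D : Set (OnePoint ℕ × OnePoint ℕ)}

theorem isClopenSupport_zero : IsClopenSupport e 0 ∅ := ⟨isClopen_empty, diagOn_zero⟩

theorem IsClopenSupport.mul (hp : IsClopenSupport e p C) (hq : IsClopenSupport e q D) :
    IsClopenSupport e (p * q) (C ∩ D) :=
  ⟨hp.1.inter hq.1, hp.2.mul hq.2⟩

theorem IsClopenSupport.eq (hp : IsClopenSupport e p C) (hq : IsClopenSupport e q C) : p = q :=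
  hp.2.eq hq.2

theorem IsClopenSupport.unique (hC : IsClopenSupport e p C) (hD : IsClopenSupport e p D) :
    C = D :=
  clopen_eq_of_preimage_coe₂_eq hC.1 hD.1 (hC.2.set_eq hD.2)

theorem IsClopenSupport.eq_zero_iff (hp : IsClopenSupport e p C) : p = 0 ↔ C = ∅ :=
  ⟨fun h => hp.unique (h ▸ isClopenSupport_zero), fun h => hp.eq (h ▸ isClopenSupport_zero)⟩

theorem IsClopenSupport.subset_of_mul_eq (hp : IsClopenSupport e p C)
    (hq : IsClopenSupport e q D) (h : p * q = p) : C ⊆ D := by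
  have hpq := hp.mul hq
  rw [h] at hpq
  exact inter_eq_left.mp (hpq.unique hp)

end ClopenSupport

section Semilattice

variable {e : HilbertBasis (ℕ × ℕ × ℤ) ℂ H} {A B' : H →L[ℂ] H} {T' : ℤ → (H →L[ℂ] H)}
  {p q : H →L[ℂ] H} {C : Set (OnePoint ℕ × OnePoint ℕ)} {k : OnePoint ℕ × OnePoint ℕ}

def Pbox (A B' : H →L[ℂ] H) (T' : ℤ → (H →L[ℂ] H)) (r s : Bool) (a b : ℕ) : H →L[ℂ] H :=
  block A r a * (block B' s b * T' 0)

theorem Pbox_true_true (a : ℕ) : Pbox A B' T' true true a a = P1 A B' T' (a, a) := by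
  simp [P1, B1, Pbox, block, mul_assoc]

theorem Pbox_true_false (a b : ℕ) : Pbox A B' T' true false a b = P2 A B' T' (a, b) := by
  simp [P2, B2, Pbox, block, mul_assoc]

theorem Pbox_false_true (a b : ℕ) : Pbox A B' T' false true a b = P3 A B' T' (a, b) := by
  simp [P3, B3, Pbox, block, mul_assoc]

theorem Pbox_false_false (a b : ℕ) : Pbox A B' T' false false a b = P4 A B' T' (a, b) := by
  simp [P4, B4, Pbox, block, mul_assoc]

theorem mem_ESet_iff :
    p ∈ ESet A B' T' ↔ p = 0 ∨ ∃ r s a b, Admissible r s a b ∧ p = Pbox A B' T' r s a b := by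
  constructor
  · rintro ((((rfl | ⟨n, rfl⟩) | ⟨⟨a, b⟩, hn, rfl⟩) | ⟨⟨a, b⟩, hn, rfl⟩) | ⟨⟨a, b⟩, rfl⟩)
    · exact .inl rfl
    · exact .inr ⟨true, true, n, n, by simp [Admissible], (Pbox_true_true n).symm⟩
    · exact .inr ⟨true, false, a, b, by simpa [Admissible] using hn, (Pbox_true_false a b).symm⟩
    · exact .inr ⟨false, true, a, b, by simpa [Admissible] using hn, (Pbox_false_true a b).symm⟩
    · exact .inr ⟨false, false, a, b, by simp [Admissible], (Pbox_false_false a b).symm⟩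
  · rintro (rfl | ⟨r, s, a, b, ⟨hr, hs⟩, rfl⟩)
    · exact .inl (.inl (.inl (.inl rfl)))
    cases r <;> cases s
    · exact .inr ⟨(a, b), Pbox_false_false a b⟩
    · exact .inl (.inr ⟨(a, b), hs rfl, Pbox_false_true a b⟩)
    · exact .inl (.inl (.inr ⟨(a, b), hr rfl, Pbox_true_false a b⟩))
    · obtain rfl : a = b := le_antisymm (hs rfl) (hr rfl)
      exact .inl (.inl (.inl (.inr ⟨a, Pbox_true_true a⟩)))

theorem exists_box_of_mem_ALam (hp : p ∈ ALam A B' T' k) :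
    ∃ r s a b, Admissible r s a b ∧ k ∈ box r s a b ∧ p = Pbox A B' T' r s a b := by
  obtain ⟨x, y⟩ := k
  induction x using OnePoint.rec <;> induction y using OnePoint.rec <;>
    simp only [ALam, ALamFin] at hp
  · obtain ⟨l, rfl⟩ := hp
    exact ⟨true, true, l, l, by simp [Admissible], by simp [box], (Pbox_true_true l).symm⟩
  · rcases hp with ⟨n, hn, rfl⟩ | ⟨l, hl, rfl⟩
    · exact ⟨true, true, n, n, by simp [Admissible], by simp [box, hn], (Pbox_true_true n).symm⟩
    · exact ⟨true, false, l, _, by simp [Admissible, hl], by simp [box],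
        (Pbox_true_false _ _).symm⟩
  · rcases hp with ⟨n, hn, rfl⟩ | ⟨l, hl, rfl⟩
    · exact ⟨true, true, n, n, by simp [Admissible], by simp [box, hn], (Pbox_true_true n).symm⟩
    · exact ⟨false, true, _, l, by simp [Admissible, hl], by simp [box],
        (Pbox_false_true _ _).symm⟩
  · rcases hp with (((⟨n, hn, rfl⟩ | ⟨⟨a, b⟩, rfl, hba, ha, rfl⟩) |
      ⟨⟨a, b⟩, rfl, hab, hb, rfl⟩) | rfl)
    · exact ⟨true, true, n, n, by simp [Admissible], by simp_all [box], (Pbox_true_true n).symm⟩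
    · exact ⟨true, false, a, b, by simp [Admissible, hba], by simp [box, ha],
        (Pbox_true_false a b).symm⟩
    · exact ⟨false, true, a, b, by simp [Admissible, hab], by simp [box, hb],
        (Pbox_false_true a b).symm⟩
    · exact ⟨false, false, _, _, by simp [Admissible], by simp [box], (Pbox_false_false _ _).symm⟩

theorem Pbox_mem_ALam {r s : Bool} {a b : ℕ} (hadm : Admissible r s a b) (hk : k ∈ box r s a b) :
    Pbox A B' T' r s a b ∈ ALam A B' T' k := by
  obtain ⟨x, y⟩ := k
  obtain ⟨hx, hy⟩ := hk
  obtain ⟨hr, hs⟩ := hadm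
  cases r <;> cases s
  · obtain rfl : x = a := hx
    obtain rfl : y = b := hy
    rw [Pbox_false_false]
    exact .inr rfl
  · obtain rfl : x = a := hx
    rw [Pbox_false_true]
    induction y using OnePoint.rec with
    | infty => exact .inr ⟨b, hs rfl, rfl⟩
    | coe y => exact .inl (.inr ⟨(a, b), rfl, hs rfl, coe_mem_seg_true.mp hy, rfl⟩)
  · obtain rfl : y = b := hy
    rw [Pbox_true_false]
    induction x using OnePoint.rec with
    | infty => exact .inr ⟨a, hr rfl, rfl⟩
    | coe x => exact .inl (.inl (.inr ⟨(a, b), rfl, hr rfl, coe_mem_seg_true.mp hx, rfl⟩))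
  · obtain rfl : a = b := le_antisymm (hs rfl) (hr rfl)
    rw [Pbox_true_true]
    induction x using OnePoint.rec <;> induction y using OnePoint.rec <;>
      simp only [coe_mem_seg_true] at hx hy
    · exact ⟨a, rfl⟩
    · exact .inl ⟨a, hy, rfl⟩
    · exact .inl ⟨a, hx, rfl⟩
    · exact .inl (.inl (.inl ⟨a, le_min hx hy, rfl⟩))

theorem ALam_subset_ESet (k : OnePoint ℕ × OnePoint ℕ) : ALam A B' T' k ⊆ ESet A B' T' := by
  intro p hp
  obtain ⟨r, s, a, b, hadm, -, rfl⟩ := exists_box_of_mem_ALam hp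
  exact mem_ESet_iff.mpr (.inr ⟨r, s, a, b, hadm, rfl⟩)

/-- Exchanges the two `ℕ`-indices, turning `B'` into a shift in the first one. -/
def swapIdx : ℕ × ℕ × ℤ ≃ ℕ × ℕ × ℤ where
  toFun v := (v.2.1, v.1, v.2.2)
  invFun v := (v.2.1, v.1, v.2.2)

theorem ShiftHyp.isUnilateralShift_fst (hyp : ShiftHyp e A B' T') : IsUnilateralShift e A :=
  ⟨fun x => hyp.1 x.1 x.2, fun n x => hyp.2.1 n x.1 x.2⟩

theorem ShiftHyp.isUnilateralShift_snd (hyp : ShiftHyp e A B' T') :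
    IsUnilateralShift (e.reindex swapIdx) B' :=
  ⟨fun x => by simpa [swapIdx] using hyp.2.2.1 x.1 x.2,
    fun n x => by simpa [swapIdx] using hyp.2.2.2.1 x.1 n x.2⟩

theorem ShiftHyp.isClopenSupport_Pbox (hyp : ShiftHyp e A B' T') (r s : Bool) (a b : ℕ) :
    IsClopenSupport e (Pbox A B' T' r s a b) (box r s a b) := by
  have hT : DiagOn e (T' 0) univ := fun v => by simpa using hyp.2.2.2.2 0 v.1 v.2.1 v.2.2
  have h : DiagOn e (Pbox A B' T' r s a b) _ :=
    (hyp.isUnilateralShift_fst.diagOn_block r a).mul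
      ((hyp.isUnilateralShift_snd.diagOn_block s b).of_reindex.mul hT)
  refine ⟨isClopen_box r s a b, ?_⟩
  convert h using 1
  ext ⟨i, j, k⟩
  simp [box, coe₂, swapIdx]

theorem ShiftHyp.exists_isClopenSupport (hyp : ShiftHyp e A B' T') (hp : p ∈ ESet A B' T') :
    ∃ C, IsClopenSupport e p C := by
  rcases mem_ESet_iff.mp hp with rfl | ⟨r, s, a, b, -, rfl⟩
  exacts [⟨∅, isClopenSupport_zero⟩, ⟨_, hyp.isClopenSupport_Pbox r s a b⟩]

theorem ShiftHyp.exists_isClopenSupport_of_mem_ALam (hyp : ShiftHyp e A B' T')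
    (hp : p ∈ ALam A B' T' k) : ∃ C, IsClopenSupport e p C ∧ k ∈ C := by
  obtain ⟨r, s, a, b, -, hk, rfl⟩ := exists_box_of_mem_ALam hp
  exact ⟨_, hyp.isClopenSupport_Pbox r s a b, hk⟩

theorem ShiftHyp.mul_mem_ESet (hyp : ShiftHyp e A B' T') (hp : p ∈ ESet A B' T')
    (hq : q ∈ ESet A B' T') : p * q ∈ ESet A B' T' := by
  rcases mem_ESet_iff.mp hp with rfl | ⟨r, s, a, b, hadm, rfl⟩
  · rwa [zero_mul]
  rcases mem_ESet_iff.mp hq with rfl | ⟨r', s', a', b', hadm', rfl⟩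
  · rwa [mul_zero]
  have hpq := (hyp.isClopenSupport_Pbox r s a b).mul (hyp.isClopenSupport_Pbox r' s' a' b')
  refine mem_ESet_iff.mpr ?_
  rcases box_inter_box r s r' s' a b a' b' with h | h <;> rw [h] at hpq
  · exact .inl (hpq.eq_zero_iff.mpr rfl)
  · exact .inr ⟨_, _, _, _, hadm.inf hadm', hpq.eq (hyp.isClopenSupport_Pbox _ _ _ _)⟩

theorem ShiftHyp.mem_ALam_iff (hyp : ShiftHyp e A B' T') (hp : IsClopenSupport e p C) :
    p ∈ ALam A B' T' k ↔ p ∈ ESet A B' T' ∧ k ∈ C := by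
  constructor
  · intro h
    obtain ⟨D, hD, hk⟩ := hyp.exists_isClopenSupport_of_mem_ALam h
    exact ⟨ALam_subset_ESet k h, hD.unique hp ▸ hk⟩
  · rintro ⟨hE, hk⟩
    rcases mem_ESet_iff.mp hE with rfl | ⟨r, s, a, b, hadm, rfl⟩
    · exact absurd (hp.eq_zero_iff.mp rfl ▸ hk) (notMem_empty k)
    · exact Pbox_mem_ALam hadm (hp.unique (hyp.isClopenSupport_Pbox r s a b) ▸ hk)

theorem ShiftHyp.isFilterIn_ALam (hyp : ShiftHyp e A B' T') (k : OnePoint ℕ × OnePoint ℕ) :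
    IsFilterIn (ESet A B' T') (ALam A B' T' k) := by
  refine ⟨ALam_subset_ESet k, fun h0 => ?_, fun p hp f hf hpf => ?_, fun p hp q hq => ?_⟩
  · exact ((hyp.mem_ALam_iff isClopenSupport_zero).mp h0).2
  · obtain ⟨C, hC, hkC⟩ := hyp.exists_isClopenSupport_of_mem_ALam hp
    obtain ⟨D, hD⟩ := hyp.exists_isClopenSupport hf
    exact (hyp.mem_ALam_iff hD).mpr ⟨hf, hC.subset_of_mul_eq hD hpf hkC⟩
  · obtain ⟨C, hC, hkC⟩ := hyp.exists_isClopenSupport_of_mem_ALam hp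
    obtain ⟨D, hD, hkD⟩ := hyp.exists_isClopenSupport_of_mem_ALam hq
    exact (hyp.mem_ALam_iff (hC.mul hD)).mpr
      ⟨hyp.mul_mem_ESet (ALam_subset_ESet k hp) (ALam_subset_ESet k hq), hkC, hkD⟩

theorem ShiftHyp.isUltrafilterIn_ALam (hyp : ShiftHyp e A B' T') (k : OnePoint ℕ × OnePoint ℕ) :
    IsUltrafilterIn (ESet A B' T') (ALam A B' T' k) := by
  refine ⟨hyp.isFilterIn_ALam k, fun B hB hsub => subset_antisymm (fun f hf => ?_) hsub⟩
  obtain ⟨C, hC⟩ := hyp.exists_isClopenSupport (hB.1 hf)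
  refine (hyp.mem_ALam_iff hC).mpr ⟨hB.1 hf, by_contra fun hk => ?_⟩
  -- a basic neighbourhood of `k` outside `C` gives an element of `B` orthogonal to `f`
  obtain ⟨r, s, a, b, hadm, hk', hbox⟩ :=
    exists_box_subset_of_mem_nhds (hC.1.isClosed.isOpen_compl.mem_nhds hk)
  have h0 : f * Pbox A B' T' r s a b = 0 :=
    (hC.mul (hyp.isClopenSupport_Pbox r s a b)).eq_zero_iff.mpr
      (subset_compl_iff_disjoint_left.mp hbox).inter_eq
  exact hB.2.1 (h0 ▸ hB.2.2.2 _ hf _ (hsub (Pbox_mem_ALam hadm hk')))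

theorem ShiftHyp.exists_eq_ALam (hyp : ShiftHyp e A B' T') {B : Set (H →L[ℂ] H)}
    (hB : IsUltrafilterIn (ESet A B' T') B) : ∃ k, B = ALam A B' T' k := by
  obtain ⟨hBf, hmax⟩ := hB
  choose C hC using fun p : B => hyp.exists_isClopenSupport (hBf.1 p.2)
  have : Nonempty B := by
    by_contra h
    have hB : ALam A B' T' (∞, ∞) = B :=
      hmax _ (hyp.isFilterIn_ALam _) fun p hp => (h ⟨⟨p, hp⟩⟩).elim
    have h00 : P1 A B' T' (0, 0) ∈ ALam A B' T' (∞, ∞) := ⟨0, rfl⟩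
    exact h ⟨⟨_, hB ▸ h00⟩⟩
  have hdir : Directed (· ⊇ ·) C := fun p q => by
    let pq : B := ⟨p * q, hBf.2.2.2 _ p.2 _ q.2⟩
    exact ⟨pq, (hC pq).unique ((hC p).mul (hC q)) ▸ ⟨inter_subset_left, inter_subset_right⟩⟩
  have hne (p : B) : (C p).Nonempty :=
    nonempty_iff_ne_empty.mpr fun h => hBf.2.1 ((hC p).eq_zero_iff.mpr h ▸ p.2)
  obtain ⟨k, hk⟩ := IsCompact.nonempty_iInter_of_directed_nonempty_isCompact_isClosed C hdir hne
    (fun p => (hC p).1.isClosed.isCompact) (fun p => (hC p).1.isClosed)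
  refine ⟨k, (hmax _ (hyp.isFilterIn_ALam k) fun p hp => ?_).symm⟩
  exact (hyp.mem_ALam_iff (hC ⟨p, hp⟩)).mpr ⟨hBf.1 hp, mem_iInter.mp hk ⟨p, hp⟩⟩

theorem ShiftHyp.ALam_injective (hyp : ShiftHyp e A B' T') :
    Function.Injective fun k : OnePoint ℕ × OnePoint ℕ => ALam A B' T' k := by
  intro k k' h
  by_contra hne
  obtain ⟨r, s, a, b, hadm, hk, hbox⟩ := exists_box_subset_of_mem_nhds (isOpen_ne.mem_nhds hne)
  have hmem : Pbox A B' T' r s a b ∈ ALam A B' T' k' :=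
    (congrArg (Pbox A B' T' r s a b ∈ ·) h).mp (Pbox_mem_ALam hadm hk)
  exact hbox ((hyp.mem_ALam_iff (hyp.isClopenSupport_Pbox r s a b)).mp hmem).2 rfl

theorem charOf_injective {X : Type} : Function.Injective (charOf : Set X → X → Bool) :=
  fun s t h => by
    ext x
    simpa [charOf] using congrFun h x

theorem ShiftHyp.continuous_charOf_ALam (hyp : ShiftHyp e A B' T') :
    Continuous fun k : OnePoint ℕ × OnePoint ℕ => charOf (ALam A B' T' k) := by
  refine continuous_pi fun p => ?_
  by_cases hp : p ∈ ESet A B' T'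
  · obtain ⟨C, hC⟩ := hyp.exists_isClopenSupport hp
    convert (continuous_boolIndicator_iff_isClopen C).mpr hC.1 using 1
    funext k
    simp [charOf, Set.boolIndicator, hyp.mem_ALam_iff hC, hp]
  · convert continuous_const (y := false) using 1
    funext k
    simpa [charOf] using fun h => hp (ALam_subset_ESet k h)

end Semilattice

theorem stmt11 {H : Type} [NormedAddCommGroup H] [InnerProductSpace ℂ H]
    [CompleteSpace H] (e : HilbertBasis (ℕ × ℕ × ℤ) ℂ H) (A B' : H →L[ℂ] H)
    (T' : ℤ → (H →L[ℂ] H)) (hyp : ShiftHyp e A B' T') :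
    ∃ h : OnePoint ℕ × OnePoint ℕ ≃ₜ
        {x : (H →L[ℂ] H) → Bool //
          ∃ Aset, IsUltrafilterIn (ESet A B' T') Aset ∧ x = charOf Aset},
      ∀ k : OnePoint ℕ × OnePoint ℕ,
        (h k : (H →L[ℂ] H) → Bool) = charOf (ALam A B' T' (k : Option ℕ × Option ℕ)) := by
  let φ : OnePoint ℕ × OnePoint ℕ →
      {x : (H →L[ℂ] H) → Bool // ∃ Aset, IsUltrafilterIn (ESet A B' T') Aset ∧ x = charOf Aset} :=
    fun k => ⟨charOf (ALam A B' T' k), ALam A B' T' k, hyp.isUltrafilterIn_ALam k, rfl⟩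
  have hinj : Function.Injective φ := fun k k' h =>
    hyp.ALam_injective (charOf_injective (congrArg Subtype.val h))
  have hsurj : Function.Surjective φ := by
    rintro ⟨_, B, hB, rfl⟩
    obtain ⟨k, rfl⟩ := hyp.exists_eq_ALam hB
    exact ⟨k, rfl⟩
  exact ⟨(hyp.continuous_charOf_ALam.subtype_mk _).homeoOfEquivCompactToT2
    (f := Equiv.ofBijective φ ⟨hinj, hsurj⟩), fun k => rfl⟩

end SOq
end
end

section
/- The set Ê_∞ of maximal (ultrafilter) characters of E is closed in the space Ê₀ of all characters; hence the tight spectrum Ê_tight, defined as the closure of Ê_∞ in Ê₀, equals Ê_∞. -/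
/-!
Every nonzero projection in `E` acts diagonally on the basis `e (i, j, k)`, as the indicator of
a box `I × J ⊆ ℕ²` whose sides are rays `[n, ∞)` or points `{n}`, and products of projections
are intersections of boxes. Closing the sides in `ℕ∞ = ℕ ∪ {∞}` turns every box into a clopen
subset of the compact space `ℕ∞²`. The boxes of a filter intersect pairwise, so their closures
have a common point `k` (rays and points have the Helly property), and the ultrafilters are
exactly the filters `A_k` of boxes whose closure contains `k`. Hence `k ↦ charOf A_k` maps
`ℕ∞²` onto `Ê_∞`; it is continuous because each coordinate is the indicator of a clopen set.
So `Ê_∞` is compact, hence closed in the Hausdorff space `Ê₀`.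
-/

open ContinuousLinearMap
open scoped Classical

noncomputable section

namespace SOq

variable {H : Type} [NormedAddCommGroup H] [InnerProductSpace ℂ H] [CompleteSpace H]

inductive Seg
  | ici (n : ℕ)
  | single (n : ℕ)

namespace Seg

def toSet : Seg → Set ℕ
  | ici n => Set.Ici n
  | single n => {n}

/-- The closure of `toSet` in `ℕ∞`. -/
def hull : Seg → Set ℕ∞
  | ici n => Set.Ici (n : ℕ∞)
  | single n => {(n : ℕ∞)}

def inf : Seg → Seg → Option Seg
  | ici a, ici b => some (ici (max a b))
  | ici a, single b => if a ≤ b then some (single b) else none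
  | single a, ici b => if b ≤ a then some (single a) else none
  | single a, single b => if a = b then some (single a) else none

@[simp] lemma hull_ici (n : ℕ) : (ici n).hull = Set.Ici (n : ℕ∞) := rfl

@[simp] lemma hull_single (n : ℕ) : (single n).hull = {(n : ℕ∞)} := rfl

variable {s t u : Seg}

lemma toSet_inf (h : s.inf t = some u) : u.toSet = s.toSet ∩ t.toSet := by
  cases s <;> cases t <;> simp only [inf] at h <;> (try split_ifs at h) <;> cases h <;>
    ext <;> simp [toSet] <;> omega

lemma hull_inf (h : s.inf t = some u) : u.hull = s.hull ∩ t.hull := by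
  cases s <;> cases t <;> simp only [inf] at h <;> (try split_ifs at h) <;> cases h <;>
    ext k <;> induction k using ENat.recTopCoe <;> simp [hull] <;> omega

lemma disjoint_toSet_of_inf_eq_none (h : s.inf t = none) : Disjoint s.toSet t.toSet := by
  cases s <;> cases t <;> simp only [inf] at h <;> (try split_ifs at h) <;> cases h <;>
    simp [toSet] <;> omega

lemma disjoint_hull_of_inf_eq_none (h : s.inf t = none) : Disjoint s.hull t.hull := by
  cases s <;> cases t <;> simp only [inf] at h <;> (try split_ifs at h) <;> cases h <;>
    simp [hull] <;> omega

lemma toSet_nonempty (s : Seg) : s.toSet.Nonempty := by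
  cases s <;> simp [toSet]

lemma toSet_injective : Function.Injective toSet := by
  intro s t h
  cases s <;> cases t <;> simp only [toSet, Set.ext_iff, Set.mem_Ici, Set.mem_singleton_iff] at h
  case ici.ici a b => exact congrArg ici (le_antisymm ((h b).mpr le_rfl) ((h a).mp le_rfl))
  case ici.single a b => exact absurd ((h (a + b + 1)).mp (by omega)) (by omega)
  case single.ici a b => exact absurd ((h (a + b + 1)).mpr (by omega)) (by omega)
  case single.single a b => exact congrArg single ((h a).mp rfl)

lemma coe_mem_hull {n : ℕ} : (n : ℕ∞) ∈ s.hull ↔ n ∈ s.toSet := by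
  cases s <;> simp [hull, toSet]

lemma isClopen_hull (s : Seg) : IsClopen s.hull := by
  cases s with
  | ici n =>
    refine ⟨isClosed_Ici, isOpen_iff_mem_nhds.mpr fun k hk => ?_⟩
    induction k using ENat.recTopCoe with
    | top => exact Ici_mem_nhds (ENat.natCast_lt_top n)
    | coe m => exact (ENat.mem_nhds_natCast_iff m).mpr hk
  | single n => exact ⟨isClosed_singleton, ENat.isOpen_singleton (ENat.natCast_ne_top n)⟩

lemma exists_mem_hull_of_forall_inter_nonempty (𝒮 : Set Seg)
    (h𝒮 : ∀ s ∈ 𝒮, ∀ t ∈ 𝒮, (s.toSet ∩ t.toSet).Nonempty) : ∃ κ : ℕ∞, ∀ s ∈ 𝒮, κ ∈ s.hull := by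
  by_cases hsingle : ∃ n, single n ∈ 𝒮
  · obtain ⟨n, hn⟩ := hsingle
    refine ⟨n, fun s hs => coe_mem_hull.mpr ?_⟩
    simpa [toSet] using h𝒮 s hs _ hn
  · refine ⟨⊤, fun s hs => ?_⟩
    cases s with
    | ici m => exact le_top (a := (m : ℕ∞))
    | single m => exact absurd ⟨m, hs⟩ hsingle

end Seg

abbrev Box := Seg × Seg

namespace Box

open Seg

/-- The supports of `P1 (n, n)`, `P2 n`, `P3 n` and `P4 n` respectively. -/
def Admissible : Box → Prop
  | (.ici a, .ici b) => a = b
  | (.ici a, .single b) => b ≤ a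
  | (.single a, .ici b) => a ≤ b
  | (.single _, .single _) => True

def supp (c : Box) : Set (ℕ × ℕ) := c.1.toSet ×ˢ c.2.toSet

def hull (c : Box) : Set (ℕ∞ × ℕ∞) := c.1.hull ×ˢ c.2.hull

variable {c d : Box}

lemma admissible_inf {u v : Seg} (hc : c.Admissible) (hd : d.Admissible)
    (hu : c.1.inf d.1 = some u) (hv : c.2.inf d.2 = some v) : Admissible (u, v) := by
  obtain ⟨c1, c2⟩ := c
  obtain ⟨d1, d2⟩ := d
  cases c1 <;> cases c2 <;> cases d1 <;> cases d2 <;>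
    simp only [Admissible, inf] at hc hd hu hv <;> (try split_ifs at hu) <;>
    (try split_ifs at hv) <;> cases hu <;> cases hv <;> simp only [Admissible] <;> omega

lemma inter_cases (hc : c.Admissible) (hd : d.Admissible) :
    (Disjoint c.supp d.supp ∧ Disjoint c.hull d.hull) ∨
      ∃ u : Box, u.Admissible ∧ u.supp = c.supp ∩ d.supp ∧ u.hull = c.hull ∩ d.hull := by
  rcases h₁ : c.1.inf d.1 with _ | u
  · exact Or.inl ⟨Set.disjoint_prod.mpr (Or.inl (disjoint_toSet_of_inf_eq_none h₁)),
      Set.disjoint_prod.mpr (Or.inl (disjoint_hull_of_inf_eq_none h₁))⟩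
  rcases h₂ : c.2.inf d.2 with _ | v
  · exact Or.inl ⟨Set.disjoint_prod.mpr (Or.inr (disjoint_toSet_of_inf_eq_none h₂)),
      Set.disjoint_prod.mpr (Or.inr (disjoint_hull_of_inf_eq_none h₂))⟩
  refine Or.inr ⟨(u, v), admissible_inf hc hd h₁ h₂, ?_, ?_⟩
  · rw [supp, supp, supp, toSet_inf h₁, toSet_inf h₂, Set.prod_inter_prod]
  · rw [hull, hull, hull, hull_inf h₁, hull_inf h₂, Set.prod_inter_prod]

lemma supp_nonempty (c : Box) : c.supp.Nonempty :=
  c.1.toSet_nonempty.prod c.2.toSet_nonempty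

lemma supp_injective : Function.Injective supp := fun c d h => by
  obtain ⟨h₁, h₂⟩ := (Set.prod_eq_prod_iff_of_nonempty c.supp_nonempty).mp h
  exact Prod.ext (toSet_injective h₁) (toSet_injective h₂)

lemma isClopen_hull (c : Box) : IsClopen c.hull :=
  c.1.isClopen_hull.prod c.2.isClopen_hull

lemma eq_of_forall_mem_hull {k k' : ℕ∞ × ℕ∞}
    (h : ∀ c : Box, c.Admissible → k ∈ c.hull → k' ∈ c.hull) : k' = k := by
  obtain ⟨k₁, k₂⟩ := k
  induction k₁ using ENat.recTopCoe <;> induction k₂ using ENat.recTopCoe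
  case top.top =>
    have hl := fun l => h (ici l, ici l) rfl (by simp [hull])
    exact Prod.ext (ENat.eq_top_iff_forall_ge.mpr fun l => (hl l).1)
      (ENat.eq_top_iff_forall_ge.mpr fun l => (hl l).2)
  case top.coe b =>
    have hl := fun l => h (ici (max l b), single b) (le_max_right l b) (by simp [hull])
    exact Prod.ext (ENat.eq_top_iff_forall_ge.mpr fun l => le_trans (by simp) (hl l).1) (hl 0).2
  case coe.top a =>
    have hl := fun l => h (single a, ici (max l a)) (le_max_right l a) (by simp [hull])
    exact Prod.ext (hl 0).1 (ENat.eq_top_iff_forall_ge.mpr fun l => le_trans (by simp) (hl l).2)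
  case coe.coe a b =>
    have hab := h (single a, single b) trivial (by simp [hull])
    exact Prod.ext hab.1 hab.2

end Box

omit [CompleteSpace H] in
lemma ext_hilbertBasis {κ : Type*} (b : HilbertBasis κ ℂ H) {f g : H →L[ℂ] H}
    (h : ∀ v, f (b v) = g (b v)) : f = g :=
  ContinuousLinearMap.ext_on
    (Submodule.dense_iff_topologicalClosure_eq_top.mpr b.dense_span)
    (by rintro x ⟨v, rfl⟩; exact h v)

def segProj (X : H →L[ℂ] H) : Seg → H →L[ℂ] H
  | .ici n => adjoint X ^ n * X ^ n
  | .single n => adjoint X ^ n * pj X * X ^ n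

section Shift

variable {κ ι : Type*} (b : HilbertBasis κ ℂ H) (φ : ℕ × ι ≃ κ) {S : H →L[ℂ] H}
  (hS₀ : ∀ t, S (b (φ (0, t))) = 0) (hS : ∀ n t, S (b (φ (n + 1, t))) = b (φ (n, t)))
include hS₀ hS

lemma adjoint_apply_shift (n : ℕ) (t : ι) : adjoint S (b (φ (n, t))) = b (φ (n + 1, t)) := by
  apply b.repr.injective
  ext w
  obtain ⟨⟨m, s⟩, rfl⟩ := φ.surjective w
  rw [b.repr_apply_apply, b.repr_apply_apply, adjoint_inner_right]
  rcases m with _ | m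
  · simp [hS₀, orthonormal_iff_ite.mp b.orthonormal, φ.injective.eq_iff]
  · simp [hS, orthonormal_iff_ite.mp b.orthonormal, φ.injective.eq_iff, and_comm]

omit [CompleteSpace H] hS₀ in
lemma pow_apply_shift_add (m n : ℕ) (t : ι) : (S ^ m) (b (φ (n + m, t))) = b (φ (n, t)) := by
  induction m with
  | zero => simp
  | succ m ih => rw [pow_succ, mul_apply_eq_comp, ← add_assoc, hS, ih]

omit [CompleteSpace H] in
lemma pow_apply_shift_of_lt {m n : ℕ} (hnm : n < m) (t : ι) : (S ^ m) (b (φ (n, t))) = 0 := by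
  induction m generalizing n with
  | zero => omega
  | succ m ih =>
    rw [pow_succ, mul_apply_eq_comp]
    rcases n with _ | n
    · rw [hS₀, map_zero]
    · rw [hS, ih (by omega)]

lemma adjoint_pow_apply_shift (m n : ℕ) (t : ι) :
    (adjoint S ^ m) (b (φ (n, t))) = b (φ (n + m, t)) := by
  induction m with
  | zero => simp
  | succ m ih => rw [pow_succ', mul_apply_eq_comp, ih, adjoint_apply_shift b φ hS₀ hS, add_assoc]

lemma pj_apply_shift (n : ℕ) (t : ι) :
    pj S (b (φ (n, t))) = if n = 0 then b (φ (n, t)) else 0 := by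
  rcases n with _ | n
  · simp [pj, hS₀]
  · simp [pj, hS, adjoint_apply_shift b φ hS₀ hS]

lemma segProj_apply_shift (s : Seg) (n : ℕ) (t : ι) :
    segProj S s (b (φ (n, t))) = if n ∈ s.toSet then b (φ (n, t)) else 0 := by
  cases s with
  | ici m =>
    obtain hlt | ⟨d, rfl⟩ := (lt_or_ge n m).imp_right Nat.exists_eq_add_of_le'
    · simp [segProj, Seg.toSet, pow_apply_shift_of_lt b φ hS₀ hS hlt, hlt.not_ge]
    · simp [segProj, Seg.toSet, pow_apply_shift_add b φ hS, adjoint_pow_apply_shift b φ hS₀ hS]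
  | single m =>
    obtain hlt | ⟨d, rfl⟩ := (lt_or_ge n m).imp_right Nat.exists_eq_add_of_le'
    · simp [segProj, Seg.toSet, pow_apply_shift_of_lt b φ hS₀ hS hlt, hlt.ne]
    · rw [segProj, mul_apply_eq_comp, mul_apply_eq_comp, pow_apply_shift_add b φ hS,
        pj_apply_shift b φ hS₀ hS]
      rcases d with _ | d
      · simp [Seg.toSet, adjoint_pow_apply_shift b φ hS₀ hS]
      · simp [Seg.toSet]

end Shift

section Semilattice

variable {X : Type} [Ring X] {E U : Set X}

lemma IsFilterIn.mul_mem_iff (hU : IsFilterIn E U) (hcomm : ∀ a ∈ E, ∀ b ∈ E, a * b = b * a)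
    (hidem : ∀ a ∈ E, a * a = a) {a b : X} (ha : a ∈ E) (hb : b ∈ E) :
    a * b ∈ U ↔ a ∈ U ∧ b ∈ U := by
  refine ⟨fun hab => ⟨hU.2.2.1 _ hab a ha ?_, hU.2.2.1 _ hab b hb ?_⟩,
    fun h => hU.2.2.2 a h.1 b h.2⟩
  · rw [mul_assoc, ← hcomm a ha b hb, ← mul_assoc, hidem a ha]
  · rw [mul_assoc, hidem b hb]

lemma IsFilterIn.isChar_charOf (hU : IsFilterIn E U) (hcomm : ∀ a ∈ E, ∀ b ∈ E, a * b = b * a)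
    (hidem : ∀ a ∈ E, a * a = a) (hne : U.Nonempty) : IsChar E (charOf U) := by
  obtain ⟨u, hu⟩ := hne
  refine ⟨⟨u, hU.1 hu, decide_eq_true hu⟩, decide_eq_false hU.2.1, fun a ha b hb => ?_⟩
  simp only [charOf, ← Bool.decide_and, hU.mul_mem_iff hcomm hidem ha hb]

end Semilattice

/-- Makes `B'` a shift along the first index, so that the lemmas on shifts apply to it. -/
def swapFirstTwo : ℕ × ℕ × ℤ ≃ ℕ × ℕ × ℤ where
  toFun p := (p.2.1, p.1, p.2.2)
  invFun p := (p.2.1, p.1, p.2.2)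
  left_inv _ := rfl
  right_inv _ := rfl

def proj (A B' : H →L[ℂ] H) (T' : ℤ → (H →L[ℂ] H)) (c : Box) : H →L[ℂ] H :=
  segProj A c.1 * segProj B' c.2 * T' 0

/-- The ultrafilter `A_{Λ(k)}` of the paper. -/
def filterAt (A B' : H →L[ℂ] H) (T' : ℤ → (H →L[ℂ] H)) (k : ℕ∞ × ℕ∞) : Set (H →L[ℂ] H) :=
  {x | ∃ c : Box, c.Admissible ∧ k ∈ c.hull ∧ x = proj A B' T' c}

section Projections

variable (A B' : H →L[ℂ] H) (T' : ℤ → (H →L[ℂ] H))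

lemma mem_ESet_iff_s12 {x : H →L[ℂ] H} :
    x ∈ ESet A B' T' ↔ x = 0 ∨ ∃ c : Box, c.Admissible ∧ x = proj A B' T' c := by
  have h₁ (n : ℕ) : P1 A B' T' (n, n) = proj A B' T' (.ici n, .ici n) := by
    simp [P1, B1, proj, segProj, mul_assoc]
  have h₂ (n : ℕ × ℕ) : P2 A B' T' n = proj A B' T' (.ici n.1, .single n.2) := by
    simp [P2, B2, proj, segProj, mul_assoc]
  have h₃ (n : ℕ × ℕ) : P3 A B' T' n = proj A B' T' (.single n.1, .ici n.2) := by
    simp [P3, B3, proj, segProj, mul_assoc]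
  have h₄ (n : ℕ × ℕ) : P4 A B' T' n = proj A B' T' (.single n.1, .single n.2) := by
    simp [P4, B4, proj, segProj, mul_assoc]
  simp only [ESet, Set.mem_union, Set.mem_singleton_iff, Set.mem_ofPred_eq]
  constructor
  · rintro ((((h | ⟨n, rfl⟩) | ⟨n, hn, rfl⟩) | ⟨n, hn, rfl⟩) | ⟨n, rfl⟩)
    · exact .inl h
    · exact .inr ⟨(.ici n, .ici n), rfl, h₁ n⟩
    · exact .inr ⟨(.ici n.1, .single n.2), hn, h₂ n⟩
    · exact .inr ⟨(.single n.1, .ici n.2), hn, h₃ n⟩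
    · exact .inr ⟨(.single n.1, .single n.2), trivial, h₄ n⟩
  · rintro (rfl | ⟨⟨a | a, b | b⟩, hc, rfl⟩)
    · exact .inl (.inl (.inl (.inl rfl)))
    · obtain rfl : a = b := hc
      exact .inl (.inl (.inl (.inr ⟨a, (h₁ a).symm⟩)))
    · exact .inl (.inl (.inr ⟨(a, b), hc, (h₂ (a, b)).symm⟩))
    · exact .inl (.inr ⟨(a, b), hc, (h₃ (a, b)).symm⟩)
    · exact .inr ⟨(a, b), (h₄ (a, b)).symm⟩

variable {e : HilbertBasis (ℕ × ℕ × ℤ) ℂ H} {A B' T'} (hyp : ShiftHyp e A B' T')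
include hyp

lemma proj_apply (c : Box) (i j : ℕ) (k : ℤ) :
    proj A B' T' c (e (i, j, k)) = if (i, j) ∈ c.supp then e (i, j, k) else 0 := by
  obtain ⟨hA₀, hA, hB₀, hB, hT⟩ := hyp
  have hAc := segProj_apply_shift e (Equiv.refl _) (fun t => hA₀ t.1 t.2)
    (fun n t => hA n t.1 t.2) c.1 i (j, k)
  have hBc := segProj_apply_shift e swapFirstTwo (fun t => hB₀ t.1 t.2)
    (fun n t => hB t.1 n t.2) c.2 j (i, k)
  simp only [Equiv.refl_apply] at hAc
  change segProj B' c.2 (e (i, j, k)) = if j ∈ c.2.toSet then e (i, j, k) else 0 at hBc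
  rw [proj, mul_apply_eq_comp, mul_apply_eq_comp, hT, add_zero, hBc]
  by_cases hj : j ∈ c.2.toSet
  · simp [Box.supp, hAc, hj]
  · simp [Box.supp, hj]

lemma proj_ne_zero (c : Box) : proj A B' T' c ≠ 0 := by
  obtain ⟨⟨i, j⟩, hij⟩ := c.supp_nonempty
  intro h
  have := congrArg (· (e (i, j, 0))) h
  rw [proj_apply hyp, if_pos hij, zero_apply] at this
  exact e.orthonormal.ne_zero _ this

lemma proj_injective : Function.Injective (proj A B' T') := by
  intro c d h
  refine Box.supp_injective (Set.ext fun ⟨i, j⟩ => ?_)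
  have hij := congrArg (· (e (i, j, 0))) h
  simp only [proj_apply hyp] at hij
  by_cases hc : (i, j) ∈ c.supp <;> by_cases hd : (i, j) ∈ d.supp <;>
    simp [hc, hd, e.orthonormal.ne_zero, eq_comm (a := (0 : H))] at hij ⊢

lemma proj_mul_apply (c d : Box) (i j : ℕ) (k : ℤ) :
    (proj A B' T' c * proj A B' T' d) (e (i, j, k)) =
      if (i, j) ∈ c.supp ∩ d.supp then e (i, j, k) else 0 := by
  rw [mul_apply_eq_comp, proj_apply hyp d]
  by_cases hd : (i, j) ∈ d.supp
  · simp [proj_apply hyp c, hd]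
  · simp [hd]

lemma proj_mul_of_supp_eq_inter {c d u : Box} (h : u.supp = c.supp ∩ d.supp) :
    proj A B' T' c * proj A B' T' d = proj A B' T' u :=
  ext_hilbertBasis e fun ⟨i, j, k⟩ => by simp only [proj_mul_apply hyp, proj_apply hyp, h]

lemma proj_mul_of_disjoint {c d : Box} (h : Disjoint c.supp d.supp) :
    proj A B' T' c * proj A B' T' d = 0 :=
  ext_hilbertBasis e fun ⟨i, j, k⟩ => by
    simp [proj_mul_apply hyp, h.inter_eq]

lemma mul_comm_of_mem_ESet {a b : H →L[ℂ] H} (ha : a ∈ ESet A B' T') (hb : b ∈ ESet A B' T') :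
    a * b = b * a := by
  rcases (mem_ESet_iff_s12 A B' T').mp ha with rfl | ⟨c, -, rfl⟩
  · simp
  rcases (mem_ESet_iff_s12 A B' T').mp hb with rfl | ⟨d, -, rfl⟩
  · simp
  exact ext_hilbertBasis e fun ⟨i, j, k⟩ => by simp only [proj_mul_apply hyp, Set.inter_comm]

lemma mul_self_of_mem_ESet {a : H →L[ℂ] H} (ha : a ∈ ESet A B' T') : a * a = a := by
  rcases (mem_ESet_iff_s12 A B' T').mp ha with rfl | ⟨c, -, rfl⟩
  · simp
  exact proj_mul_of_supp_eq_inter hyp (Set.inter_self _).symm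

end Projections

section Filters

variable {e : HilbertBasis (ℕ × ℕ × ℤ) ℂ H} {A B' : H →L[ℂ] H} {T' : ℤ → (H →L[ℂ] H)}
  (hyp : ShiftHyp e A B' T')
include hyp

lemma proj_mem_filterAt_iff {c : Box} (hc : c.Admissible) {k : ℕ∞ × ℕ∞} :
    proj A B' T' c ∈ filterAt A B' T' k ↔ k ∈ c.hull :=
  ⟨fun ⟨_, _, hk, hcd⟩ => proj_injective hyp hcd ▸ hk, fun hk => ⟨c, hc, hk, rfl⟩⟩

lemma isFilterIn_filterAt (k : ℕ∞ × ℕ∞) : IsFilterIn (ESet A B' T') (filterAt A B' T' k) := by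
  refine ⟨?_, ?_, ?_, ?_⟩
  · rintro _ ⟨c, hc, -, rfl⟩
    exact (mem_ESet_iff_s12 A B' T').mpr (.inr ⟨c, hc, rfl⟩)
  · rintro ⟨c, -, -, hc⟩
    exact proj_ne_zero hyp c hc.symm
  · rintro _ ⟨c, hc, hk, rfl⟩ f hf hcf
    rcases (mem_ESet_iff_s12 A B' T').mp hf with rfl | ⟨d, hd, rfl⟩
    · exact absurd (hcf.symm.trans (mul_zero _)) (proj_ne_zero hyp c)
    rcases Box.inter_cases hc hd with ⟨hdisj, -⟩ | ⟨u, -, hsupp, hhull⟩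
    · exact absurd (hcf.symm.trans (proj_mul_of_disjoint hyp hdisj)) (proj_ne_zero hyp c)
    rw [proj_mul_of_supp_eq_inter hyp hsupp] at hcf
    obtain rfl := proj_injective hyp hcf
    exact ⟨d, hd, (hhull ▸ hk).2, rfl⟩
  · rintro _ ⟨c, hc, hkc, rfl⟩ _ ⟨d, hd, hkd, rfl⟩
    rcases Box.inter_cases hc hd with ⟨-, hdisj⟩ | ⟨u, hu, hsupp, hhull⟩
    · exact absurd hkd (Set.disjoint_left.mp hdisj hkc)
    rw [proj_mul_of_supp_eq_inter hyp hsupp]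
    exact ⟨u, hu, hhull ▸ ⟨hkc, hkd⟩, rfl⟩

lemma exists_subset_filterAt {F : Set (H →L[ℂ] H)} (hF : IsFilterIn (ESet A B' T') F) :
    ∃ k, F ⊆ filterAt A B' T' k := by
  obtain ⟨hFE, hF0, -, hFmul⟩ := hF
  have hF_proj (x) (hx : x ∈ F) : ∃ c : Box, c.Admissible ∧ x = proj A B' T' c :=
    ((mem_ESet_iff_s12 A B' T').mp (hFE hx)).resolve_left fun h => hF0 (h ▸ hx)
  have hmeet (c d : Box) (hc : proj A B' T' c ∈ F) (hd : proj A B' T' d ∈ F) :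
      (c.1.toSet ∩ d.1.toSet).Nonempty ∧ (c.2.toSet ∩ d.2.toSet).Nonempty := by
    rw [← Set.prod_nonempty_iff, ← Set.prod_inter_prod]
    exact Set.not_disjoint_iff_nonempty_inter.mp fun h =>
      hF0 (proj_mul_of_disjoint hyp h ▸ hFmul _ hc _ hd)
  obtain ⟨k₁, hk₁⟩ := Seg.exists_mem_hull_of_forall_inter_nonempty
    (Prod.fst '' {c | proj A B' T' c ∈ F}) (by
      rintro _ ⟨c, hc, rfl⟩ _ ⟨d, hd, rfl⟩
      exact (hmeet c d hc hd).1)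
  obtain ⟨k₂, hk₂⟩ := Seg.exists_mem_hull_of_forall_inter_nonempty
    (Prod.snd '' {c | proj A B' T' c ∈ F}) (by
      rintro _ ⟨c, hc, rfl⟩ _ ⟨d, hd, rfl⟩
      exact (hmeet c d hc hd).2)
  refine ⟨(k₁, k₂), fun x hx => ?_⟩
  obtain ⟨c, hc, rfl⟩ := hF_proj x hx
  exact ⟨c, hc, ⟨hk₁ _ ⟨c, hx, rfl⟩, hk₂ _ ⟨c, hx, rfl⟩⟩, rfl⟩

lemma eq_of_filterAt_subset {k k' : ℕ∞ × ℕ∞} (h : filterAt A B' T' k ⊆ filterAt A B' T' k') :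
    k = k' :=
  (Box.eq_of_forall_mem_hull fun _ hc hk =>
    (proj_mem_filterAt_iff hyp hc).mp (h ((proj_mem_filterAt_iff hyp hc).mpr hk))).symm

lemma isUltrafilterIn_filterAt (k : ℕ∞ × ℕ∞) :
    IsUltrafilterIn (ESet A B' T') (filterAt A B' T' k) := by
  refine ⟨isFilterIn_filterAt hyp k, fun F hF hsub => ?_⟩
  obtain ⟨k', hk'⟩ := exists_subset_filterAt hyp hF
  obtain rfl := eq_of_filterAt_subset hyp (hsub.trans hk')
  exact hk'.antisymm hsub

lemma exists_eq_filterAt {F : Set (H →L[ℂ] H)} (hF : IsUltrafilterIn (ESet A B' T') F) :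
    ∃ k, F = filterAt A B' T' k :=
  let ⟨k, hk⟩ := exists_subset_filterAt hyp hF.1
  ⟨k, (hF.2 _ (isFilterIn_filterAt hyp k) hk).symm⟩

lemma isChar_charOf_filterAt (k : ℕ∞ × ℕ∞) :
    IsChar (ESet A B' T') (charOf (filterAt A B' T' k)) :=
  (isFilterIn_filterAt hyp k).isChar_charOf (fun _ ha _ hb => mul_comm_of_mem_ESet hyp ha hb)
    (fun _ ha => mul_self_of_mem_ESet hyp ha) ⟨_, (.ici 0, .ici 0), rfl, by simp [Box.hull], rfl⟩

lemma continuous_charOf_filterAt : Continuous fun k => charOf (filterAt A B' T' k) := by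
  refine continuous_pi fun x => ?_
  by_cases hx : ∃ c : Box, c.Admissible ∧ x = proj A B' T' c
  · obtain ⟨c, hc, rfl⟩ := hx
    have hind (k : ℕ∞ × ℕ∞) :
        charOf (filterAt A B' T' k) (proj A B' T' c) = c.hull.boolIndicator k := by
      by_cases hk : k ∈ c.hull <;>
        simp [charOf, Set.boolIndicator, proj_mem_filterAt_iff hyp hc, hk]
    simp only [hind]
    exact (continuous_boolIndicator_iff_isClopen _).mpr c.isClopen_hull
  · have hfalse (k : ℕ∞ × ℕ∞) : charOf (filterAt A B' T' k) x = false := by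
      rw [charOf, decide_eq_false_iff_not]
      rintro ⟨c, hc, -, rfl⟩
      exact hx ⟨c, hc, rfl⟩
    simp only [hfalse]
    exact continuous_const

end Filters

theorem stmt12 {H : Type} [NormedAddCommGroup H] [InnerProductSpace ℂ H]
    [CompleteSpace H] (e : HilbertBasis (ℕ × ℕ × ℤ) ℂ H) (A B' : H →L[ℂ] H)
    (T' : ℤ → (H →L[ℂ] H)) (hyp : ShiftHyp e A B' T') :
    IsClosed {y : {x : (H →L[ℂ] H) → Bool // IsChar (ESet A B' T') x} |
        ∃ Aset, IsUltrafilterIn (ESet A B' T') Aset ∧ (y : (H →L[ℂ] H) → Bool) = charOf Aset} ∧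
    closure {y : {x : (H →L[ℂ] H) → Bool // IsChar (ESet A B' T') x} |
        ∃ Aset, IsUltrafilterIn (ESet A B' T') Aset ∧ (y : (H →L[ℂ] H) → Bool) = charOf Aset}
      = {y : {x : (H →L[ℂ] H) → Bool // IsChar (ESet A B' T') x} |
        ∃ Aset, IsUltrafilterIn (ESet A B' T') Aset ∧
          (y : (H →L[ℂ] H) → Bool) = charOf Aset} := by
  have hrange : {y : {x : (H →L[ℂ] H) → Bool // IsChar (ESet A B' T') x} |
      ∃ Aset, IsUltrafilterIn (ESet A B' T') Aset ∧ (y : (H →L[ℂ] H) → Bool) = charOf Aset} =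
      Set.range fun k => ⟨_, isChar_charOf_filterAt hyp k⟩ := by
    ext y
    constructor
    · rintro ⟨F, hF, hy⟩
      obtain ⟨k, rfl⟩ := exists_eq_filterAt hyp hF
      exact ⟨k, Subtype.ext hy.symm⟩
    · rintro ⟨k, rfl⟩
      exact ⟨_, isUltrafilterIn_filterAt hyp k, rfl⟩
  have hclosed := hrange ▸
    (isCompact_range ((continuous_charOf_filterAt hyp).subtype_mk _)).isClosed
  exact ⟨hclosed, hclosed.closure_eq⟩

end SOq
end
end
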